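/- arXiv:2205.04128 — 5 statements merged into one kernel-verified Lean document; each statement's English description precedes it below -/
import Mathlib

section
/- There exist additive complements A and B (infinite sets of non-negative integers) such that limsup_{x→+∞} A(x)B(x)/x = 2 and A(x)B(x) − x = 1 for infinitely many positive integers x. -/
open Filter

/-- The counting function of a set `A` of non-negative integers:
`countBelow A x = #{a ∈ A : a ≤ x}`. -/
noncomputable def countBelow (A : Set ℕ) (x : ℕ) : ℕ := (A ∩ Set.Iic x).ncard

/-- Two infinite sets of non-negative integers are additive complements if
their sumset contains all sufficiently large integers. -/
def AddComp (A B : Set ℕ) : Prop :=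
  A.Infinite ∧ B.Infinite ∧ ∀ᶠ n in atTop, ∃ a ∈ A, ∃ b ∈ B, a + b = n

open Finset Topology

/-!
Split the binary digit positions into the powers of two `Q` and the rest, and let `A` and `B` be
the numbers whose binary digits lie outside, resp. inside, `Q`. Every integer is uniquely `a + b`
with `a ∈ A`, `b ∈ B`, so `A(x)B(x) ≤ 2x + 1`, while at `x = 2^m - 1` the two counts are `2` to the
number of digit positions below `m` outside, resp. inside, `Q`, whose product is `x + 1`.
Since `Q` is so sparse, for `p = 2^(k+1)` every element of `A` or `B` below `2^(p+1)` is at most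
`x = 2^p + 2^(p/2+1)`, so `A(x)B(x) ≥ 2^(p+1)`, which is `2x` up to a factor `1 + o(1)`.
-/

section DigitSet

variable {Q : Set ℕ}

def digitSet (Q : Set ℕ) : Set ℕ := {n | ∀ i ∈ n.bitIndices, i ∈ Q}

lemma sum_two_pow_mem_digitSet {s : Finset ℕ} (hs : ↑s ⊆ Q) : ∑ i ∈ s, 2 ^ i ∈ digitSet Q := by
  intro i hi
  rw [← List.mem_toFinset, toFinset_bitIndices_sum_two_pow] at hi
  exact hs hi

lemma digitSet_infinite (hQ : Q.Infinite) : (digitSet Q).Infinite := by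
  refine (hQ.image (Nat.pow_right_injective le_rfl).injOn).mono ?_
  rintro _ ⟨i, hi, rfl⟩
  simpa using sum_two_pow_mem_digitSet (s := {i}) (by simpa using hi)

lemma exists_digitSet_compl_add_digitSet_eq (n : ℕ) :
    ∃ a ∈ digitSet Qᶜ, ∃ b ∈ digitSet Q, a + b = n := by
  classical
  refine ⟨∑ i ∈ n.bitIndices.toFinset with i ∉ Q, 2 ^ i, sum_two_pow_mem_digitSet ?_,
    ∑ i ∈ n.bitIndices.toFinset with i ∈ Q, 2 ^ i, sum_two_pow_mem_digitSet ?_, ?_⟩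
  · exact fun i hi => (mem_filter.1 hi).2
  · exact fun i hi => (mem_filter.1 hi).2
  · rw [add_comm, sum_filter_add_sum_filter_not, sum_toFinset_bitIndices_two_pow]

lemma toFinset_bitIndices_add {a b : ℕ}
    (h : Disjoint a.bitIndices.toFinset b.bitIndices.toFinset) :
    (a + b).bitIndices.toFinset = a.bitIndices.toFinset ∪ b.bitIndices.toFinset := by
  conv_lhs => rw [← sum_toFinset_bitIndices_two_pow a, ← sum_toFinset_bitIndices_two_pow b,
    ← sum_union h, toFinset_bitIndices_sum_two_pow]

lemma coe_toFinset_bitIndices_add_sdiff_and_inter {a b : ℕ} (ha : a ∈ digitSet Qᶜ)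
    (hb : b ∈ digitSet Q) :
    (↑(a + b).bitIndices.toFinset : Set ℕ) \ Q = ↑a.bitIndices.toFinset ∧
      (↑(a + b).bitIndices.toFinset : Set ℕ) ∩ Q = ↑b.bitIndices.toFinset := by
  have haQ : ∀ i ∈ a.bitIndices.toFinset, i ∉ Q := fun i hi => ha i (List.mem_toFinset.1 hi)
  have hbQ : ∀ i ∈ b.bitIndices.toFinset, i ∈ Q := fun i hi => hb i (List.mem_toFinset.1 hi)
  rw [toFinset_bitIndices_add (disjoint_left.2 fun i hia hib => haQ i hia (hbQ i hib)), coe_union]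
  constructor <;> ext i <;>
    simp only [Set.mem_sdiff, Set.mem_inter_iff, Set.mem_union, mem_coe] <;> grind

lemma injOn_add_digitSet_compl_prod_digitSet :
    Set.InjOn (fun p : ℕ × ℕ => p.1 + p.2) (digitSet Qᶜ ×ˢ digitSet Q) := by
  rintro ⟨a, b⟩ ⟨ha, hb⟩ ⟨a', b'⟩ ⟨ha', hb'⟩ (h : a + b = a' + b')
  obtain ⟨hadiff, hbinter⟩ := coe_toFinset_bitIndices_add_sdiff_and_inter ha hb
  obtain ⟨hadiff', hbinter'⟩ := coe_toFinset_bitIndices_add_sdiff_and_inter ha' hb'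
  rw [h] at hadiff hbinter
  simp only [Prod.mk.injEq]
  exact ⟨equivBitIndices.injective (coe_injective (hadiff.symm.trans hadiff')),
    equivBitIndices.injective (coe_injective (hbinter.symm.trans hbinter'))⟩

lemma two_pow_card_le_countBelow {s : Finset ℕ} (hs : ↑s ⊆ Q) {x : ℕ}
    (hx : ∑ i ∈ s, 2 ^ i ≤ x) : 2 ^ #s ≤ countBelow (digitSet Q) x := by
  rw [← card_powerset, ← Set.ncard_coe_finset, countBelow]
  refine Set.ncard_le_ncard_of_injOn (fun t => ∑ i ∈ t, 2 ^ i) ?_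
    (geomSum_injective le_rfl).injOn ((Set.finite_Iic x).inter_of_right _)
  intro t ht
  rw [mem_coe, mem_powerset] at ht
  exact ⟨sum_two_pow_mem_digitSet ((coe_subset.2 ht).trans hs), (sum_le_sum_of_subset ht).trans hx⟩

lemma countBelow_two_pow_sub_one_le {s : Finset ℕ} {m : ℕ} (hs : ∀ i ∈ Q, i < m → i ∈ s) :
    countBelow (digitSet Q) (2 ^ m - 1) ≤ 2 ^ #s := by
  rw [← card_powerset, ← Set.ncard_coe_finset, countBelow]
  refine Set.ncard_le_ncard_of_injOn (fun n => n.bitIndices.toFinset) ?_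
    equivBitIndices.injective.injOn s.powerset.finite_toSet
  rintro n ⟨hn, hnm : n ≤ 2 ^ m - 1⟩
  rw [mem_coe, mem_powerset]
  intro i hi
  have hi' := List.mem_toFinset.1 hi
  have : 2 ^ i < 2 ^ m := (Nat.two_pow_le_of_mem_bitIndices hi').trans_lt (by
    have := Nat.one_le_two_pow (n := m); omega)
  exact hs i (hn i hi') ((Nat.pow_lt_pow_iff_right (by norm_num)).1 this)

lemma two_pow_card_filter_not_mul_two_pow_card_filter [DecidablePred (· ∈ Q)] (m : ℕ) :
    2 ^ #{i ∈ range m | i ∉ Q} * 2 ^ #{i ∈ range m | i ∈ Q} = 2 ^ m := by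
  rw [← pow_add, add_comm, card_filter_add_card_filter_not, card_range]

lemma two_pow_le_countBelow_mul [DecidablePred (· ∈ Q)] {m x : ℕ}
    (hQ : ∑ i ∈ range m with i ∈ Q, 2 ^ i ≤ x) (hQc : ∑ i ∈ range m with i ∉ Q, 2 ^ i ≤ x) :
    2 ^ m ≤ countBelow (digitSet Qᶜ) x * countBelow (digitSet Q) x := by
  rw [← two_pow_card_filter_not_mul_two_pow_card_filter (Q := Q)]
  exact Nat.mul_le_mul
    (two_pow_card_le_countBelow (Q := Qᶜ) (fun i hi => (mem_filter.1 hi).2) hQc)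
    (two_pow_card_le_countBelow (Q := Q) (fun i hi => (mem_filter.1 hi).2) hQ)

lemma countBelow_mul_countBelow_two_pow_sub_one (m : ℕ) :
    countBelow (digitSet Qᶜ) (2 ^ m - 1) * countBelow (digitSet Q) (2 ^ m - 1) = 2 ^ m := by
  classical
  have hsum (p : ℕ → Prop) [DecidablePred p] : ∑ i ∈ range m with p i, 2 ^ i ≤ 2 ^ m - 1 :=
    Nat.le_sub_one_of_lt (Nat.geomSum_lt le_rfl fun i hi => mem_range.1 (mem_filter.1 hi).1)
  refine le_antisymm ?_ (two_pow_le_countBelow_mul (hsum _) (hsum _))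
  refine (Nat.mul_le_mul ?_ ?_).trans_eq
    (two_pow_card_filter_not_mul_two_pow_card_filter (Q := Q) m) <;>
    exact countBelow_two_pow_sub_one_le fun i hi him => mem_filter.2 ⟨mem_range.2 him, hi⟩

lemma two_pow_succ_le_countBelow_mul {p q : ℕ} (hp : p ∈ Q) (hgap : ∀ i ∈ Q, i < p → i < q) :
    2 ^ (p + 1) ≤
      countBelow (digitSet Qᶜ) (2 ^ p + 2 ^ q) * countBelow (digitSet Q) (2 ^ p + 2 ^ q) := by
  classical
  apply two_pow_le_countBelow_mul
  · rw [range_add_one, filter_insert, if_pos hp, sum_insert (by simp)]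
    have : ∑ i ∈ range p with i ∈ Q, 2 ^ i < 2 ^ q := Nat.geomSum_lt le_rfl fun i hi => by
      rw [mem_filter, mem_range] at hi
      exact hgap i hi.2 hi.1
    omega
  · have : ∑ i ∈ range (p + 1) with i ∉ Q, 2 ^ i < 2 ^ p := Nat.geomSum_lt le_rfl fun i hi => by
      rw [mem_filter, mem_range] at hi
      exact lt_of_le_of_ne (Nat.lt_succ_iff.1 hi.1) fun h => hi.2 (h ▸ hp)
    exact this.le.trans (Nat.le_add_right _ _)

end DigitSet

lemma countBelow_mul_le_of_injOn_add {A B : Set ℕ}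
    (h : Set.InjOn (fun p : ℕ × ℕ => p.1 + p.2) (A ×ˢ B)) (x : ℕ) :
    countBelow A x * countBelow B x ≤ 2 * x + 1 := by
  rw [countBelow, countBelow, ← Set.ncard_prod, ← Nat.card_Iic, ← Set.ncard_coe_finset, coe_Iic]
  refine Set.ncard_le_ncard_of_injOn _ ?_
    (h.mono (Set.prod_mono Set.inter_subset_left Set.inter_subset_left)) (Set.finite_Iic _)
  rintro ⟨a, b⟩ ⟨⟨-, ha : a ≤ x⟩, ⟨-, hb : b ≤ x⟩⟩
  exact Set.mem_Iic.2 (by omega)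

lemma limsup_eq_of_le_of_tendsto_comp {α β : Type*} {l : Filter α} {l' : Filter β} [l'.NeBot]
    {u v : α → ℝ} {φ : β → α} {c : ℝ} (huv : u ≤ᶠ[l] v) (hv : Tendsto v l (𝓝 c))
    (hφ : Tendsto φ l' l) (huφ : Tendsto (u ∘ φ) l' (𝓝 c)) : limsup u l = c := by
  have := hφ.neBot
  have hc : MapClusterPt c l u := .of_comp hφ huφ.mapClusterPt
  refine le_antisymm ?_ (hc.le_limsup (hv.isBoundedUnder_le.mono_le huv))
  calc limsup u l
      ≤ limsup v l := limsup_le_limsup huv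
        (IsCoboundedUnder.of_frequently_ge (hc.frequently (eventually_ge_nhds (sub_one_lt c))))
        hv.isBoundedUnder_le
    _ = c := hv.limsup_eq

def twoPowers : Set ℕ := Set.range (2 ^ ·)

lemma twoPowers_infinite : twoPowers.Infinite :=
  Set.infinite_range_of_injective (Nat.pow_right_injective le_rfl)

lemma twoPowers_compl_infinite : twoPowersᶜ.Infinite := by
  refine Set.infinite_of_injective_forall_mem (f := fun n => 2 * n + 3)
    (fun a b h => by simp only at h; omega) ?_
  rintro n ⟨j, hj⟩
  cases j with
  | zero => simp at hj
  | succ j => simp only [pow_succ] at hj; omega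

lemma two_pow_succ_le_countBelow_mul_twoPowers (k : ℕ) :
    2 ^ (2 ^ (k + 1) + 1) ≤
      countBelow (digitSet twoPowersᶜ) (2 ^ 2 ^ (k + 1) + 2 ^ (2 ^ k + 1)) *
        countBelow (digitSet twoPowers) (2 ^ 2 ^ (k + 1) + 2 ^ (2 ^ k + 1)) := by
  refine two_pow_succ_le_countBelow_mul ⟨k + 1, rfl⟩ ?_
  rintro _ ⟨j, rfl⟩ hj
  have := (Nat.pow_lt_pow_iff_right (by norm_num)).1 hj
  exact Nat.lt_succ_of_le (Nat.pow_le_pow_right (by norm_num) (by omega))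

lemma limsup_countBelow_digitSet_twoPowers :
    limsup (fun x : ℕ => ((countBelow (digitSet twoPowersᶜ) x : ℝ) *
      countBelow (digitSet twoPowers) x) / x) atTop = 2 := by
  set u := fun x : ℕ => ((countBelow (digitSet twoPowersᶜ) x : ℝ) *
      countBelow (digitSet twoPowers) x) / x
  have hle (x : ℕ) : u x ≤ (2 * x + 1 : ℝ) / x :=
    div_le_div_of_nonneg_right (by exact_mod_cast
      countBelow_mul_le_of_injOn_add injOn_add_digitSet_compl_prod_digitSet x) x.cast_nonneg
  have hv : Tendsto (fun x : ℕ => (2 * x + 1 : ℝ) / x) atTop (𝓝 2) := by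
    rw [← add_zero (2 : ℝ)]
    refine ((tendsto_one_div_atTop_nhds_zero_nat (𝕜 := ℝ)).const_add 2).congr' ?_
    filter_upwards [eventually_ne_atTop 0] with x hx
    field_simp
    ring
  set N : ℕ → ℕ := fun k => 2 ^ 2 ^ k
  have hN : Tendsto N atTop atTop :=
    (tendsto_pow_atTop_atTop_of_one_lt one_lt_two).comp
      (tendsto_pow_atTop_atTop_of_one_lt one_lt_two)
  have hφ : Tendsto (fun k => N k ^ 2 + 2 * N k) atTop atTop :=
    tendsto_atTop_mono (fun k => by nlinarith) hN
  have hlow (k : ℕ) : 2 * ((N k : ℝ) / (N k + 2)) ≤ u (N k ^ 2 + 2 * N k) := by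
    have hcount := two_pow_succ_le_countBelow_mul_twoPowers k
    rw [show 2 ^ 2 ^ (k + 1) + 2 ^ (2 ^ k + 1) = N k ^ 2 + 2 * N k by simp only [N]; ring,
      show 2 ^ (2 ^ (k + 1) + 1) = 2 * N k ^ 2 by simp only [N]; ring] at hcount
    calc 2 * ((N k : ℝ) / (N k + 2))
        = (2 * N k ^ 2 : ℝ) / ((N k ^ 2 + 2 * N k : ℕ) : ℝ) := by
          push_cast; field_simp
      _ ≤ u (N k ^ 2 + 2 * N k) :=
          div_le_div_of_nonneg_right (by exact_mod_cast hcount) (by positivity)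
  refine limsup_eq_of_le_of_tendsto_comp (.of_forall hle) hv hφ ?_
  refine tendsto_of_tendsto_of_tendsto_of_le_of_le ?_ (hv.comp hφ) hlow (fun k => hle _)
  simpa using ((tendsto_natCast_div_add_atTop (2 : ℝ)).comp hN).const_mul 2

theorem stmt0 :
    ∃ A B : Set ℕ, AddComp A B ∧
      limsup (fun x : ℕ => ((countBelow A x : ℝ) * countBelow B x) / x) atTop = 2 ∧
      {x : ℕ | 0 < x ∧ countBelow A x * countBelow B x = x + 1}.Infinite := by
  refine ⟨digitSet twoPowersᶜ, digitSet twoPowers,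
    ⟨digitSet_infinite twoPowers_compl_infinite, digitSet_infinite twoPowers_infinite,
      .of_forall exists_digitSet_compl_add_digitSet_eq⟩,
    limsup_countBelow_digitSet_twoPowers, ?_⟩
  refine Set.infinite_of_forall_exists_gt fun n => ⟨2 ^ (n + 1) - 1, ⟨?_, ?_⟩, ?_⟩
  all_goals have := Nat.lt_two_pow_self (n := n + 1)
  · omega
  · rw [countBelow_mul_countBelow_two_pow_sub_one]
    omega
  · omega
end

section
/- For any sequence {b_j} of positive integers with b_0 = 1 and b_j ≥ 2 for all j ≥ 1, there exist additive complements A and B such that limsup_{x→+∞} A(x)B(x)/x = limsup_{k→+∞} 2/(1 + D_k), where D_k = Σ_{i=0}^{k−1} (−1)^i (Π_{j=0}^{i} b_{k−j})^{−1}, and A(x)B(x) − x = 1 for infinitely many positive integers x. -/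
open Filter

/-- `Dk b k = Σ_{i=0}^{k-1} (-1)^i (Π_{j=0}^{i} b_{k-j})⁻¹`. -/
noncomputable def Dk (b : ℕ → ℕ) (k : ℕ) : ℝ :=
  ∑ i ∈ Finset.range k, (-1 : ℝ) ^ i * (∏ j ∈ Finset.range (i + 1), (b (k - j) : ℝ))⁻¹

/-!
Write `m_k = b_1 ⋯ b_k` and expand every `n` in the mixed radix system with place values `m_k`.
Let `A` (resp. `B`) consist of the numbers all of whose nonzero digits sit at even (resp. odd)
positions. Splitting the digits of `n` by parity writes `n = a + c` with `a ∈ A`, `c ∈ B` in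
exactly one way, so `A(x) B(x)` counts the `n ≤ 2x` whose two parts are both `≤ x`: these are the
`x + 1` numbers `n ≤ x` and the "large sums" `n ∈ (x, 2x]`.

With `s_0 = 0` and `s_{k+1} = m_k - s_k` one has `D_k = s_k / m_k`, and the part of `n < m_K` on
the positions of the parity of `K` is at most `s_K`. For `m_k ≤ x < m_{k+1}` this bounds the number
of large sums by `m_k - s_k`, and by `x + 1 - 2 s_k` when `x < m_k + s_k`; both give
`A(x) B(x) / x ≤ 2 m_k / (m_k + s_k) + 4 / k`. Conversely every `n ∈ (x, 2 m_k)` is a large sum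
for `x = m_k + s_k`, so there `A(x) B(x) / x ≥ 2 m_k / (m_k + s_k)`, while there are no large sums
at all for `x = m_k - 1`.
-/

open Finset

lemma limsup_eq_of_le_comp {f v e : ℕ → ℝ} {K g : ℕ → ℕ}
    (hf : IsBoundedUnder (· ≤ ·) atTop f) (hf' : IsBoundedUnder (· ≥ ·) atTop f)
    (hv : IsBoundedUnder (· ≤ ·) atTop v) (hv' : IsBoundedUnder (· ≥ ·) atTop v)
    (hK : Tendsto K atTop atTop) (hg : Tendsto g atTop atTop) (he : Tendsto e atTop (nhds 0))
    (hupper : ∀ᶠ x in atTop, f x ≤ v (K x) + e (K x)) (hlower : ∀ k, v k ≤ f (g k)) :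
    limsup f atTop = limsup v atTop := by
  apply le_antisymm
  · refine le_of_forall_gt_imp_ge_of_dense fun c hc => ?_
    obtain ⟨c', hvc', hc'c⟩ := exists_between hc
    have hve : ∀ᶠ k in atTop, v k + e k < c :=
      ((eventually_lt_of_limsup_lt hvc' hv).and (he.eventually_lt_const (sub_pos.2 hc'c))).mono
        fun k hk => by linarith [hk.1, hk.2]
    exact limsup_le_of_le hf'.isCoboundedUnder_le
      ((hupper.and (hK.eventually hve)).mono fun x hx => hx.1.trans hx.2.le)
  · refine le_of_forall_lt_imp_le_of_dense fun c hc => le_limsup_of_frequently_le ?_ hf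
    exact hg.frequently ((frequently_lt_of_lt_limsup hv'.isCoboundedUnder_le hc).mono
      fun k hk => hk.le.trans (hlower k))

namespace MixedRadix

def IsMixedRadix (b : ℕ → ℕ) : Prop := ∀ j, 1 ≤ j → 2 ≤ b j

def place (b : ℕ → ℕ) : ℕ → ℕ
  | 0 => 1
  | k + 1 => place b k * b (k + 1)

/-- `altSum b k = place b (k - 1) - place b (k - 2) + ⋯ ± place b 0`; it is the numerator of
`Dk b k = altSum b k / place b k`. -/
def altSum (b : ℕ → ℕ) : ℕ → ℕ
  | 0 => 0
  | k + 1 => place b k - altSum b k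

/-- The position of the leading digit of `x ≥ 1`. -/
def topIndex (b : ℕ → ℕ) (x : ℕ) : ℕ := Nat.findGreatest (fun t => place b t ≤ x) x

variable {b : ℕ → ℕ}

section Place

@[simp] lemma place_zero (b : ℕ → ℕ) : place b 0 = 1 := rfl

lemma place_succ (b : ℕ → ℕ) (k : ℕ) : place b (k + 1) = place b k * b (k + 1) := rfl

lemma place_dvd_place {i j : ℕ} (h : i ≤ j) : place b i ∣ place b j := by
  induction j, h using Nat.le_induction with
  | base => exact dvd_rfl
  | succ j _ ih => exact ih.mul_right _

lemma two_mul_place_le (hb : IsMixedRadix b) (k : ℕ) : 2 * place b k ≤ place b (k + 1) := by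
  rw [place_succ, mul_comm]
  exact Nat.mul_le_mul_left _ (hb _ k.succ_pos)

lemma place_pos (hb : IsMixedRadix b) (k : ℕ) : 0 < place b k := by
  induction k with
  | zero => exact Nat.one_pos
  | succ k ih => have := two_mul_place_le hb k; omega

lemma place_lt_place_succ (hb : IsMixedRadix b) (k : ℕ) : place b k < place b (k + 1) := by
  have := two_mul_place_le hb k
  have := place_pos hb k
  omega

lemma place_strictMono (hb : IsMixedRadix b) : StrictMono (place b) :=
  strictMono_nat_of_lt_succ (place_lt_place_succ hb)

lemma lt_place (hb : IsMixedRadix b) (k : ℕ) : k < place b k := by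
  induction k with
  | zero => exact Nat.one_pos
  | succ k ih => have := place_lt_place_succ hb k; omega

lemma lt_place_succ_self (hb : IsMixedRadix b) (n : ℕ) : n < place b (n + 1) :=
  n.lt_succ_self.trans (lt_place hb _)

lemma altSum_le_place (hb : IsMixedRadix b) : ∀ k, altSum b k ≤ place b k
  | 0 => Nat.zero_le _
  | k + 1 => (Nat.sub_le _ _).trans (place_lt_place_succ hb k).le

lemma altSum_succ_add (hb : IsMixedRadix b) (k : ℕ) :
    altSum b (k + 1) + altSum b k = place b k :=
  Nat.sub_add_cancel (altSum_le_place hb k)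

lemma one_le_altSum_succ (hb : IsMixedRadix b) : ∀ k, 1 ≤ altSum b (k + 1)
  | 0 => by simp [altSum, place]
  | k + 1 => by
    have : altSum b (k + 1) ≤ place b k := Nat.sub_le _ _
    have := two_mul_place_le hb k
    have := place_pos hb k
    show 1 ≤ place b (k + 1) - altSum b (k + 1)
    omega

lemma place_topIndex_le {x : ℕ} (hx : 1 ≤ x) : place b (topIndex b x) ≤ x :=
  Nat.findGreatest_spec (P := fun t => place b t ≤ x) (Nat.zero_le x) hx

lemma lt_place_topIndex_succ (hb : IsMixedRadix b) (x : ℕ) :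
    x < place b (topIndex b x + 1) := by
  by_contra! h
  exact Nat.findGreatest_is_greatest (Nat.lt_succ_self _)
    ((lt_place hb _).le.trans h) h

lemma le_topIndex (hb : IsMixedRadix b) {j x : ℕ} (h : place b j ≤ x) : j ≤ topIndex b x :=
  Nat.le_findGreatest ((lt_place hb j).le.trans h) h

lemma tendsto_topIndex (hb : IsMixedRadix b) : Tendsto (topIndex b) atTop atTop :=
  tendsto_atTop_atTop.2 fun j => ⟨place b j, fun _ hx => le_topIndex hb hx⟩

end Place

section Digits

/-- `digitPart b n i = d_i * place b i`, where `d_i` is the `i`-th digit of `n` in the mixed radix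
system with place values `place b`. -/
def digitPart (b : ℕ → ℕ) (n i : ℕ) : ℕ := n % place b (i + 1) - n % place b i

lemma mod_place_le_mod_place_succ (n i : ℕ) : n % place b i ≤ n % place b (i + 1) := by
  rw [← Nat.mod_mod_of_dvd n (place_dvd_place i.le_succ)]
  exact Nat.mod_le _ _

lemma mod_place_add_digitPart (n i : ℕ) :
    n % place b i + digitPart b n i = n % place b (i + 1) :=
  Nat.add_sub_cancel' (mod_place_le_mod_place_succ n i)

lemma sum_digitPart (n K : ℕ) : ∑ i ∈ range K, digitPart b n i = n % place b K := by
  have := sum_range_tsub (f := fun i => n % place b i)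
    (monotone_nat_of_le_succ (mod_place_le_mod_place_succ n)) K
  rwa [place_zero, Nat.mod_one, tsub_zero] at this

lemma place_dvd_digitPart (n i : ℕ) : place b i ∣ digitPart b n i := by
  have h := Nat.div_add_mod (n % place b (i + 1)) (place b i)
  rw [Nat.mod_mod_of_dvd n (place_dvd_place i.le_succ)] at h
  exact ⟨n % place b (i + 1) / place b i, by unfold digitPart; omega⟩

lemma digitPart_le (n i : ℕ) : digitPart b n i ≤ n :=
  (Nat.sub_le _ _).trans (Nat.mod_le _ _)

lemma digitPart_add_place_le (hb : IsMixedRadix b) (n i : ℕ) :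
    digitPart b n i + place b i ≤ place b (i + 1) := by
  obtain ⟨t, ht⟩ := place_dvd_digitPart (b := b) n i
  have hlt : digitPart b n i < place b (i + 1) :=
    (Nat.sub_le _ _).trans_lt (Nat.mod_lt _ (place_pos hb _))
  rw [ht, place_succ] at hlt ⊢
  calc place b i * t + place b i = place b i * (t + 1) := by ring
    _ ≤ place b i * b (i + 1) := Nat.mul_le_mul_left _ (Nat.lt_of_mul_lt_mul_left hlt)

lemma digitPart_eq_zero_of_lt (hb : IsMixedRadix b) {n i : ℕ} (h : n < place b i) :
    digitPart b n i = 0 := by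
  rw [digitPart, Nat.mod_eq_of_lt h, Nat.mod_eq_of_lt (h.trans (place_lt_place_succ hb i)),
    Nat.sub_self]

lemma place_le_digitPart (hb : IsMixedRadix b) {n t : ℕ} (h : place b t ≤ n)
    (h' : n < place b (t + 1)) : place b t ≤ digitPart b n t := by
  rw [digitPart, Nat.mod_eq_of_lt h']
  have := Nat.mod_add_div n (place b t)
  have : place b t * 1 ≤ place b t * (n / place b t) :=
    Nat.mul_le_mul_left _ ((Nat.one_le_div_iff (place_pos hb t)).2 h)
  omega

lemma digitPart_place (hb : IsMixedRadix b) {i k : ℕ} (h : i ≠ k) :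
    digitPart b (place b k) i = 0 := by
  rcases lt_or_gt_of_ne h with h | h
  · rw [digitPart, Nat.mod_eq_zero_of_dvd (place_dvd_place h),
      Nat.mod_eq_zero_of_dvd (place_dvd_place h.le)]
  · exact digitPart_eq_zero_of_lt hb (place_strictMono hb h)

variable (p : ℕ → Prop) [DecidablePred p]

def partBelow (b : ℕ → ℕ) (n K : ℕ) : ℕ := ∑ i ∈ range K, if p i then digitPart b n i else 0

/-- The number whose digits are those of `n` at the positions in `p` and `0` elsewhere
(positions `i > n` carry no digit, as `n < place b (n + 1)`). -/
def digitsOn (b : ℕ → ℕ) (n : ℕ) : ℕ := partBelow p b n (n + 1)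

lemma partBelow_succ (n K : ℕ) :
    partBelow p b n (K + 1) = partBelow p b n K + if p K then digitPart b n K else 0 :=
  sum_range_succ _ _

lemma partBelow_add_partBelow_not (n K : ℕ) :
    partBelow p b n K + partBelow (¬ p ·) b n K = n % place b K := by
  rw [partBelow, partBelow, ← sum_add_distrib, ← sum_digitPart]
  exact sum_congr rfl fun i _ => by split_ifs <;> simp_all

lemma partBelow_le_mod (n K : ℕ) : partBelow p b n K ≤ n % place b K :=
  (Nat.le_add_right _ _).trans (partBelow_add_partBelow_not p n K).le

lemma partBelow_eq_of_le (hb : IsMixedRadix b) {n K K' : ℕ} (hn : n < place b K) (hK : K ≤ K') :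
    partBelow p b n K' = partBelow p b n K := by
  refine (sum_subset (range_subset_range.2 hK) fun i _ hi => ?_).symm
  rw [digitPart_eq_zero_of_lt hb
    (hn.trans_le ((place_strictMono hb).monotone (not_lt.1 (mem_range.not.1 hi)))), ite_self]

lemma partBelow_mod_place (hb : IsMixedRadix b) {n K K' : ℕ} (hK : K ≤ K') :
    partBelow p b n K' % place b K = partBelow p b n K := by
  induction K', hK using Nat.le_induction with
  | base =>
    exact Nat.mod_eq_of_lt ((partBelow_le_mod p n K).trans_lt (Nat.mod_lt _ (place_pos hb K)))
  | succ K' hKK' ih =>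
    obtain ⟨t, ht⟩ := (place_dvd_place hKK').trans (place_dvd_digitPart (b := b) n K')
    rw [partBelow_succ]
    split_ifs
    · rw [ht, Nat.add_mul_mod_self_left, ih]
    · rw [add_zero, ih]

lemma digitsOn_eq_partBelow (hb : IsMixedRadix b) {n K : ℕ} (hn : n < place b K) :
    digitsOn p b n = partBelow p b n K := by
  rcases le_total K (n + 1) with h | h
  · exact partBelow_eq_of_le p hb hn h
  · exact (partBelow_eq_of_le p hb (lt_place_succ_self hb n) h).symm

lemma digitsOn_add_digitsOn_not (hb : IsMixedRadix b) (n : ℕ) :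
    digitsOn p b n + digitsOn (¬ p ·) b n = n := by
  rw [digitsOn, digitsOn, partBelow_add_partBelow_not,
    Nat.mod_eq_of_lt (lt_place_succ_self hb n)]

lemma digitsOn_mod_place (hb : IsMixedRadix b) (n K : ℕ) :
    digitsOn p b n % place b K = partBelow p b n K := by
  rw [digitsOn_eq_partBelow p hb ((lt_place_succ_self hb n).trans_le
    ((place_strictMono hb).monotone (le_max_right K (n + 1)))),
    partBelow_mod_place p hb (le_max_left _ _)]

lemma digitPart_digitsOn (hb : IsMixedRadix b) (n i : ℕ) :
    digitPart b (digitsOn p b n) i = if p i then digitPart b n i else 0 := by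
  rw [digitPart, digitsOn_mod_place p hb, digitsOn_mod_place p hb, partBelow_succ]
  omega

lemma digitPart_le_digitsOn (hb : IsMixedRadix b) {n i : ℕ} (hi : p i) :
    digitPart b n i ≤ digitsOn p b n := by
  simpa only [digitPart_digitsOn p hb, if_pos hi] using digitPart_le (b := b) (digitsOn p b n) i

lemma digitsOn_eq_zero_iff (hb : IsMixedRadix b) {n : ℕ} :
    digitsOn p b n = 0 ↔ ∀ i, p i → digitPart b n i = 0 := by
  simp only [digitsOn, partBelow, sum_eq_zero_iff, mem_range, ite_eq_right_iff]
  refine ⟨fun h i hi => ?_, fun h i _ => h i⟩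
  rcases lt_or_ge i (n + 1) with hin | hin
  · exact h i hin hi
  · exact digitPart_eq_zero_of_lt hb
      ((lt_place_succ_self hb n).trans_le ((place_strictMono hb).monotone hin))

lemma digitsOn_digitsOn_eq_zero (hb : IsMixedRadix b) {q : ℕ → Prop} [DecidablePred q]
    (hqp : ∀ i, q i → ¬ p i) (n : ℕ) : digitsOn q b (digitsOn p b n) = 0 :=
  (digitsOn_eq_zero_iff q hb).2 fun i hi => by rw [digitPart_digitsOn p hb, if_neg (hqp i hi)]

lemma mod_place_add_mod_place_lt (hb : IsMixedRadix b) {a c : ℕ}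
    (ha : digitsOn (¬ p ·) b a = 0) (hc : digitsOn p b c = 0) (K : ℕ) :
    a % place b K + c % place b K < place b K := by
  induction K with
  | zero => simp [Nat.mod_one]
  | succ K ih =>
    rw [← mod_place_add_digitPart, ← mod_place_add_digitPart]
    have := digitPart_add_place_le hb a K
    have := digitPart_add_place_le hb c K
    by_cases hp : p K
    · rw [(digitsOn_eq_zero_iff p hb).1 hc K hp]; omega
    · rw [(digitsOn_eq_zero_iff _ hb).1 ha K hp]; omega

/-- Adding numbers with digits on complementary positions causes no carries. -/
lemma digitsOn_add (hb : IsMixedRadix b) {a c : ℕ}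
    (ha : digitsOn (¬ p ·) b a = 0) (hc : digitsOn p b c = 0) : digitsOn p b (a + c) = a := by
  have hmod (K : ℕ) : (a + c) % place b K = a % place b K + c % place b K := by
    rw [Nat.add_mod, Nat.mod_eq_of_lt (mod_place_add_mod_place_lt p hb ha hc K)]
  have hK : a + c < place b (a + c + 1) := lt_place_succ_self hb _
  have ha' : digitsOn p b a = a := by
    have := digitsOn_add_digitsOn_not p hb a
    omega
  calc digitsOn p b (a + c) = partBelow p b (a + c) (a + c + 1) := digitsOn_eq_partBelow p hb hK
    _ = partBelow p b a (a + c + 1) := sum_congr rfl fun i _ => by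
      split_ifs with hp
      · have := mod_place_le_mod_place_succ (b := b) a i
        have := mod_place_le_mod_place_succ (b := b) c i
        have := (digitsOn_eq_zero_iff p hb).1 hc i hp
        simp only [digitPart, hmod] at this ⊢
        omega
      · rfl
    _ = a := by rw [← digitsOn_eq_partBelow p hb (by omega), ha']

lemma digitsOn_not_add (hb : IsMixedRadix b) {a c : ℕ}
    (ha : digitsOn (¬ p ·) b a = 0) (hc : digitsOn p b c = 0) :
    digitsOn (¬ p ·) b (a + c) = c := by
  have := digitsOn_add_digitsOn_not p hb (a + c)
  rw [digitsOn_add p hb ha hc] at this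
  omega

lemma digitsOn_place_eq_zero (hb : IsMixedRadix b) {k : ℕ} (hk : ¬ p k) :
    digitsOn p b (place b k) = 0 :=
  (digitsOn_eq_zero_iff p hb).2 fun i hi => digitPart_place hb (ne_of_apply_ne p (by simp [hi, hk]))

lemma lt_place_of_digitsOn_le (hb : IsMixedRadix b) {n x K : ℕ} (h : digitsOn p b n ≤ x)
    (h' : digitsOn (¬ p ·) b n ≤ x) (hx : x < place b K) : n < place b K := by
  by_contra! hn
  have hKt : place b K ≤ place b (topIndex b n) :=
    (place_strictMono hb).monotone (le_topIndex hb hn)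
  have ht := place_le_digitPart hb (place_topIndex_le ((place_pos hb K).trans_le hn))
    (lt_place_topIndex_succ hb n)
  by_cases hpt : p (topIndex b n)
  · have := digitPart_le_digitsOn p hb hpt (n := n); omega
  · have := digitPart_le_digitsOn (¬ p ·) hb hpt (n := n); omega

end Digits

section Alternating

variable {p : ℕ → Prop} [DecidablePred p]

/-- Here `p` is the parity class of `K`. -/
lemma partBelow_le_altSum (hb : IsMixedRadix b) (hp : ∀ i, p (i + 1) ↔ ¬ p i) (n : ℕ) :
    ∀ K, p K → partBelow p b n K ≤ altSum b K := by
  intro K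
  induction K using Nat.twoStepInduction with
  | zero => simp [partBelow, altSum]
  | one => intro h1; simp [partBelow, (hp 0).1 h1]
  | more K ih _ =>
    intro hK2
    have hK : p K := not_not.1 ((hp K).not.1 ((hp (K + 1)).1 hK2))
    rw [partBelow_succ, partBelow_succ, if_pos hK, if_neg ((hp K).not.2 (not_not.2 hK))]
    have := ih hK
    have := digitPart_add_place_le hb n K
    have := altSum_le_place hb K
    show _ ≤ place b (K + 1) - (place b K - altSum b K)
    omega

lemma digitsOn_le_altSum (hb : IsMixedRadix b) (hp : ∀ i, p (i + 1) ↔ ¬ p i) {n K : ℕ}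
    (hK : p K) (hn : n < place b K) : digitsOn p b n ≤ altSum b K :=
  (digitsOn_eq_partBelow p hb hn).trans_le (partBelow_le_altSum hb hp n K hK)

lemma digitsOn_le_place_add_altSum (hb : IsMixedRadix b) (hp : ∀ i, p (i + 1) ↔ ¬ p i)
    {n k : ℕ} (hn : n < 2 * place b k) : digitsOn p b n ≤ place b k + altSum b k := by
  rw [digitsOn_eq_partBelow p hb (hn.trans_le (two_mul_place_le hb k)), partBelow_succ]
  by_cases hk : p k
  · rw [if_pos hk]
    obtain ⟨t, ht⟩ := place_dvd_digitPart (b := b) n k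
    have h1 : digitPart b n k < 2 * place b k := (digitPart_le n k).trans_lt hn
    rw [ht] at h1 ⊢
    have : place b k * t ≤ place b k * 1 :=
      Nat.mul_le_mul_left _ (Nat.le_of_lt_succ (Nat.lt_of_mul_lt_mul_left (a := place b k)
        (by linarith : place b k * t < place b k * 2)))
    have := partBelow_le_altSum hb hp n k hk
    omega
  · rw [if_neg hk]
    have := partBelow_le_mod p (b := b) n k
    have := Nat.mod_lt n (place_pos hb k)
    omega

lemma mod_place_add_place_le (hb : IsMixedRadix b) (hp : ∀ i, p (i + 1) ↔ ¬ p i) {n j : ℕ}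
    (hj : p (j + 1)) (h : place b (j + 1) ≤ n) (h' : n < place b (j + 2)) :
    n % place b j + place b (j + 1) ≤ digitsOn p b n + altSum b j := by
  have h1 := partBelow_add_partBelow_not p (b := b) n j
  have h2 := partBelow_le_altSum (p := (¬ p ·)) hb (fun i => (hp i).not) n j ((hp j).1 hj)
  have h3 := place_le_digitPart hb h h'
  rw [digitsOn_eq_partBelow p hb h', partBelow_succ, partBelow_succ, if_pos hj]
  omega

end Alternating

section Counting

def evenDigitSet (b : ℕ → ℕ) : Set ℕ := {n | digitsOn (¬ Even ·) b n = 0}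

def oddDigitSet (b : ℕ → ℕ) : Set ℕ := {n | digitsOn Even b n = 0}

def largeSums (b : ℕ → ℕ) (x : ℕ) : Finset ℕ :=
  (Ioc x (2 * x)).filter fun n => digitsOn Even b n ≤ x ∧ digitsOn (¬ Even ·) b n ≤ x

lemma addComp_evenDigitSet_oddDigitSet (hb : IsMixedRadix b) :
    AddComp (evenDigitSet b) (oddDigitSet b) := by
  refine ⟨?_, ?_, .of_forall fun n => ⟨digitsOn Even b n, ?_, digitsOn (¬ Even ·) b n, ?_,
    digitsOn_add_digitsOn_not Even hb n⟩⟩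
  · refine Set.infinite_of_forall_exists_gt fun a =>
      ⟨place b (2 * a), digitsOn_place_eq_zero _ hb (not_not.2 (even_two_mul a)), ?_⟩
    have := lt_place hb (2 * a)
    omega
  · refine Set.infinite_of_forall_exists_gt fun a =>
      ⟨place b (2 * a + 1), digitsOn_place_eq_zero _ hb (Nat.not_even_two_mul_add_one a), ?_⟩
    have := lt_place hb (2 * a + 1)
    omega
  · exact digitsOn_digitsOn_eq_zero Even hb (fun _ h h' => h h') n
  · exact digitsOn_digitsOn_eq_zero _ hb (fun _ h h' => h' h) n

lemma countBelow_eq_card (A : Set ℕ) [DecidablePred (· ∈ A)] (x : ℕ) :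
    countBelow A x = ((Iic x).filter (· ∈ A)).card := by
  rw [countBelow, ← Set.ncard_coe_finset]
  congr 1
  ext n
  simp [and_comm]

lemma card_filter_digitsOn_le (hb : IsMixedRadix b) (x : ℕ) :
    ((range (2 * x + 1)).filter fun n => digitsOn Even b n ≤ x ∧ digitsOn (¬ Even ·) b n ≤ x).card
      = countBelow (evenDigitSet b) x * countBelow (oddDigitSet b) x := by
  classical
  rw [countBelow_eq_card, countBelow_eq_card, ← card_product]
  refine card_nbij' (fun n => (digitsOn Even b n, digitsOn (¬ Even ·) b n))
    (fun q => q.1 + q.2) (fun n hn => ?_) (fun q hq => ?_) (fun n _ => ?_) (fun q hq => ?_)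
  · simp only [mem_coe, mem_filter, mem_product, mem_range, mem_Iic] at hn ⊢
    exact ⟨⟨hn.2.1, digitsOn_digitsOn_eq_zero Even hb (fun _ h h' => h h') n⟩,
      hn.2.2, digitsOn_digitsOn_eq_zero _ hb (fun _ h h' => h' h) n⟩
  · simp only [mem_coe, mem_filter, mem_product, mem_range, mem_Iic] at hq ⊢
    rw [digitsOn_add Even hb hq.1.2 hq.2.2, digitsOn_not_add Even hb hq.1.2 hq.2.2]
    omega
  · exact digitsOn_add_digitsOn_not Even hb n
  · simp only [mem_coe, mem_filter, mem_product, mem_Iic] at hq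
    simp only [digitsOn_add Even hb hq.1.2 hq.2.2, digitsOn_not_add Even hb hq.1.2 hq.2.2]

lemma countBelow_mul_countBelow (hb : IsMixedRadix b) (x : ℕ) :
    countBelow (evenDigitSet b) x * countBelow (oddDigitSet b) x
      = x + 1 + (largeSums b x).card := by
  have hsplit : ((range (2 * x + 1)).filter fun n =>
      digitsOn Even b n ≤ x ∧ digitsOn (¬ Even ·) b n ≤ x) = range (x + 1) ∪ largeSums b x := by
    ext n
    have := digitsOn_add_digitsOn_not Even hb n
    simp only [mem_filter, mem_range, mem_union, largeSums, mem_Ioc]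
    omega
  rw [← card_filter_digitsOn_le hb, hsplit, card_union_of_disjoint, card_range]
  exact disjoint_left.2 fun n h h' => by
    simp only [mem_range, largeSums, mem_filter, mem_Ioc] at h h'
    omega

end Counting

section Blocks

lemma add_altSum_le_of_mem_largeSums (hb : IsMixedRadix b) {k x n : ℕ}
    (hx : x < place b (k + 1)) (hn : n ∈ largeSums b x) : n + altSum b k ≤ x + place b k := by
  simp only [largeSums, mem_filter] at hn
  obtain ⟨-, hα, hβ⟩ := hn
  have hn' := lt_place_of_digitsOn_le Even hb hα hβ hx
  have := digitsOn_add_digitsOn_not Even hb n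
  have := altSum_succ_add hb k
  by_cases hk : Even (k + 1)
  · have := digitsOn_le_altSum hb (fun _ => Nat.even_add_one) hk hn'
    omega
  · have := digitsOn_le_altSum (p := (¬ Even ·)) hb (fun _ => Nat.even_add_one.not) hk hn'
    omega

lemma card_largeSums_add_altSum_le (hb : IsMixedRadix b) {k x : ℕ}
    (hx : x < place b (k + 1)) : (largeSums b x).card + altSum b k ≤ place b k := by
  have := altSum_le_place hb k
  have hsub : largeSums b x ⊆ Ioc x (x + (place b k - altSum b k)) := fun n hn => by
    have := add_altSum_le_of_mem_largeSums hb hx hn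
    simp only [largeSums, mem_filter, mem_Ioc] at hn ⊢
    omega
  have := card_le_card hsub
  rw [Nat.card_Ioc] at this
  omega

lemma mod_place_add_place_le_of_mem_largeSums (hb : IsMixedRadix b) {j x n : ℕ}
    (hx : place b (j + 1) ≤ x) (hx' : x < place b (j + 2)) (hn : n ∈ largeSums b x) :
    n % place b j + place b (j + 1) ≤ x + altSum b j := by
  simp only [largeSums, mem_filter, mem_Ioc] at hn
  obtain ⟨⟨hxn, -⟩, hα, hβ⟩ := hn
  have hn' := lt_place_of_digitsOn_le Even hb hα hβ hx'
  by_cases hj : Even (j + 1)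
  · have := mod_place_add_place_le hb (fun _ => Nat.even_add_one) hj (by omega) hn'
    omega
  · have := mod_place_add_place_le (p := (¬ Even ·)) hb (fun _ => Nat.even_add_one.not) hj
      (by omega) hn'
    omega

lemma card_filter_mod_le {c d : ℕ} (hc : c < d) (q : ℕ) :
    ((range (d * q)).filter (· % d ≤ c)).card = q * (c + 1) := by
  have hblock : (range d).filter (· % d ≤ c) = range (c + 1) := by
    ext k
    simp only [mem_filter, mem_range]
    constructor
    · rintro ⟨hk, h⟩
      rw [Nat.mod_eq_of_lt hk] at h
      omega
    · intro hk
      rw [Nat.mod_eq_of_lt (by omega)]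
      omega
  rw [← Nat.count_eq_card_filter_range]
  induction q with
  | zero => simp
  | succ q ih =>
    rw [Nat.mul_succ, Nat.count_add, ih]
    simp only [Nat.mul_add_mod, Nat.count_eq_card_filter_range, hblock, card_range]
    ring

lemma sub_place_mem_of_mem_largeSums (hb : IsMixedRadix b) {j u n : ℕ}
    (hu : u < altSum b (j + 1)) (hn : n ∈ largeSums b (place b (j + 1) + u)) :
    n - place b (j + 1) ∈
      (range (place b (j + 1))).filter (· % place b j ≤ u + altSum b j) \ range (u + 1) := by
  have hs1 := altSum_le_place hb (j + 1)
  have hxM : place b (j + 1) + u < place b (j + 2) :=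
    lt_of_lt_of_le (by omega) (two_mul_place_le hb (j + 1))
  have h1 := add_altSum_le_of_mem_largeSums hb hxM hn
  have h2 := mod_place_add_place_le_of_mem_largeSums hb (Nat.le_add_right _ _) hxM hn
  have ht := place_succ b j
  simp only [largeSums, mem_filter, mem_Ioc] at hn
  have hmod : (n - place b (j + 1)) % place b j = n % place b j := by
    conv_rhs => rw [show n = place b j * b (j + 1) + (n - place b (j + 1)) by omega,
      Nat.mul_add_mod]
  simp only [Finset.mem_sdiff, mem_filter, mem_range, hmod]
  omega

lemma card_largeSums_add_two_mul_altSum_le (hb : IsMixedRadix b) {j u : ℕ}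
    (hu : u < altSum b (j + 1)) :
    (largeSums b (place b (j + 1) + u)).card + 2 * altSum b (j + 1) ≤ place b (j + 1) + u + 1 := by
  have hs := altSum_succ_add hb j
  have hs1 := altSum_le_place hb (j + 1)
  obtain ⟨e, he⟩ : ∃ e, b (j + 1) = e + 2 :=
    ⟨b (j + 1) - 2, by have := hb (j + 1) j.succ_pos; omega⟩
  have hM : place b (j + 1) = place b j * (e + 2) := by rw [place_succ, he]
  have hsub : range (u + 1) ⊆ (range (place b (j + 1))).filter (· % place b j ≤ u + altSum b j) :=
    fun k hk => by
      simp only [mem_range, mem_filter] at hk ⊢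
      exact ⟨by omega, (Nat.mod_le _ _).trans (by omega)⟩
  have hinj : Set.InjOn (· - place b (j + 1)) (largeSums b (place b (j + 1) + u)) :=
    fun n hn n' hn' h => by
      simp only [largeSums, mem_coe, mem_filter, mem_Ioc] at hn hn' h
      omega
  have hcard := card_le_card_of_injOn _
    (fun n hn => sub_place_mem_of_mem_largeSums hb hu (mem_coe.1 hn)) hinj
  have hT : ((range (place b (j + 1))).filter (· % place b j ≤ u + altSum b j)).card
      = (e + 2) * (u + altSum b j + 1) := by
    rw [hM, card_filter_mod_le (by omega)]
  have hsplit := card_sdiff_add_card_eq_card hsub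
  rw [hT, card_range] at hsplit
  generalize (largeSums b (place b (j + 1) + u)).card = N at hcard ⊢
  rw [hM, ← hs]
  -- what remains is `(b (j + 1) - 2) * (altSum b (j + 1) - (u + 1)) ≥ 0`
  have : e * (u + 1) ≤ e * altSum b (j + 1) := Nat.mul_le_mul_left e (by omega)
  nlinarith

lemma card_mul_le (hb : IsMixedRadix b) {k x : ℕ} (hk : 1 ≤ k) (hkx : place b k ≤ x)
    (hx : x < place b (k + 1)) :
    (x + 1 + (largeSums b x).card) * (place b k + altSum b k) ≤ (2 * place b k + 4) * x := by
  have hs := altSum_le_place hb k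
  obtain ⟨j, rfl⟩ : ∃ j, k = j + 1 := ⟨k - 1, by omega⟩
  have hs1 := one_le_altSum_succ hb j
  rcases lt_or_ge x (place b (j + 1) + altSum b (j + 1)) with hc | hc
  · obtain ⟨u, rfl⟩ : ∃ u, x = place b (j + 1) + u := ⟨x - place b (j + 1), by omega⟩
    have := card_largeSums_add_two_mul_altSum_le hb (j := j) (u := u) (by omega)
    nlinarith
  · have := card_largeSums_add_altSum_le hb hx
    nlinarith

lemma le_card_largeSums (hb : IsMixedRadix b) (k : ℕ) :
    2 * place b k ≤ place b k + altSum b k + 1 + (largeSums b (place b k + altSum b k)).card := by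
  have hsub : Ioo (place b k + altSum b k) (2 * place b k) ⊆
      largeSums b (place b k + altSum b k) := fun n hn => by
    simp only [mem_Ioo] at hn
    have := digitsOn_le_place_add_altSum hb (fun _ => Nat.even_add_one) hn.2
    have := digitsOn_le_place_add_altSum (p := (¬ Even ·)) hb (fun _ => Nat.even_add_one.not) hn.2
    simp only [largeSums, mem_filter, mem_Ioc]
    omega
  have := card_le_card hsub
  rw [Nat.card_Ioo] at this
  omega

lemma largeSums_place_sub_one (hb : IsMixedRadix b) (k : ℕ) : largeSums b (place b k - 1) = ∅ := by
  refine eq_empty_of_forall_notMem fun n hn => ?_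
  have := place_pos hb k
  simp only [largeSums, mem_filter, mem_Ioc] at hn
  have := lt_place_of_digitsOn_le Even hb hn.2.1 hn.2.2 (by omega : place b k - 1 < place b k)
  omega

end Blocks

section Density

lemma Dk_succ (b : ℕ → ℕ) (k : ℕ) : Dk b (k + 1) = (1 - Dk b k) / b (k + 1) := by
  simp only [Dk, sum_range_succ' _ k, prod_range_succ' _ (_ + 1), Nat.add_sub_add_right, pow_succ,
    sub_div, sum_div]
  simp only [zero_add, prod_range_one, Nat.sub_zero]
  rw [sub_eq_add_neg, ← sum_neg_distrib, add_comm]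
  exact congrArg₂ _ (by ring) (sum_congr rfl fun i _ => by ring)

lemma Dk_eq_altSum_div_place (hb : IsMixedRadix b) : ∀ k, Dk b k = altSum b k / place b k
  | 0 => by simp [Dk, altSum]
  | k + 1 => by
    have := place_pos hb k
    have := hb (k + 1) k.succ_pos
    rw [Dk_succ, Dk_eq_altSum_div_place hb k, altSum, Nat.cast_sub (altSum_le_place hb k),
      place_succ, Nat.cast_mul]
    field_simp

lemma two_div_one_add_Dk (hb : IsMixedRadix b) (k : ℕ) :
    2 / (1 + Dk b k) = 2 * place b k / (place b k + altSum b k) := by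
  have := place_pos hb k
  rw [Dk_eq_altSum_div_place hb]
  field_simp

lemma countBelow_mul_div_le (hb : IsMixedRadix b) {k x : ℕ} (hk : 1 ≤ k) (hkx : place b k ≤ x)
    (hx : x < place b (k + 1)) :
    (countBelow (evenDigitSet b) x : ℝ) * countBelow (oddDigitSet b) x / x
      ≤ 2 * place b k / (place b k + altSum b k) + 4 / k := by
  have hxpos : (0 : ℝ) < x := by exact_mod_cast (place_pos hb k).trans_le hkx
  have hkpos : (0 : ℝ) < k := by exact_mod_cast hk
  have hkm : (k : ℝ) ≤ place b k + altSum b k := by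
    exact_mod_cast (lt_place hb k).le.trans (Nat.le_add_right _ _)
  have key : ((countBelow (evenDigitSet b) x * countBelow (oddDigitSet b) x : ℕ) : ℝ) *
      (place b k + altSum b k) ≤ (2 * place b k + 4) * x := by
    rw [countBelow_mul_countBelow hb]
    exact_mod_cast card_mul_le hb hk hkx hx
  push_cast at key
  calc _ ≤ (2 * place b k + 4) / (place b k + altSum b k : ℝ) := by
        rw [div_le_div_iff₀ hxpos (hkpos.trans_le hkm)]
        linarith
    _ = 2 * place b k / (place b k + altSum b k) + 4 / (place b k + altSum b k : ℝ) := add_div _ _ _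
    _ ≤ _ := by gcongr

lemma le_countBelow_mul_div (hb : IsMixedRadix b) (k : ℕ) :
    2 * place b k / (place b k + altSum b k : ℝ) ≤
      (countBelow (evenDigitSet b) (place b k + altSum b k) : ℝ) *
        countBelow (oddDigitSet b) (place b k + altSum b k) /
          ((place b k + altSum b k : ℕ) : ℝ) := by
  have := place_pos hb k
  have key : 2 * place b k ≤ countBelow (evenDigitSet b) (place b k + altSum b k) *
      countBelow (oddDigitSet b) (place b k + altSum b k) := by
    rw [countBelow_mul_countBelow hb]
    exact le_card_largeSums hb k
  rw [Nat.cast_add]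
  exact div_le_div_of_nonneg_right (by exact_mod_cast key) (by positivity)

lemma countBelow_mul_div_le_three (hb : IsMixedRadix b) (x : ℕ) :
    (countBelow (evenDigitSet b) x : ℝ) * countBelow (oddDigitSet b) x / x ≤ 3 := by
  rcases Nat.eq_zero_or_pos x with rfl | hx
  · simp
  have hcard : (largeSums b x).card ≤ x := by
    have hsub : largeSums b x ⊆ Ioc x (2 * x) := filter_subset _ _
    have := card_le_card hsub
    rw [Nat.card_Ioc] at this
    omega
  have key : countBelow (evenDigitSet b) x * countBelow (oddDigitSet b) x ≤ 3 * x := by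
    rw [countBelow_mul_countBelow hb]
    omega
  rw [div_le_iff₀ (by exact_mod_cast hx)]
  exact_mod_cast key

lemma limsup_countBelow_mul_div (hb : IsMixedRadix b) :
    limsup (fun x : ℕ => (countBelow (evenDigitSet b) x : ℝ) * countBelow (oddDigitSet b) x / x)
      atTop = limsup (fun k => 2 * place b k / (place b k + altSum b k : ℝ)) atTop := by
  have hv (k : ℕ) : 2 * place b k / (place b k + altSum b k : ℝ) ≤ 2 := by
    have := place_pos hb k
    rw [div_le_iff₀ (by positivity)]
    linarith [(Nat.cast_nonneg (altSum b k) : (0 : ℝ) ≤ _)]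
  refine limsup_eq_of_le_comp (isBoundedUnder_of ⟨3, countBelow_mul_div_le_three hb⟩)
    (isBoundedUnder_of ⟨0, fun x => by positivity⟩) (isBoundedUnder_of ⟨2, hv⟩)
    (isBoundedUnder_of ⟨0, fun k => by positivity⟩) (tendsto_topIndex hb)
    (tendsto_atTop_mono (fun k => (lt_place hb k).le.trans (Nat.le_add_right _ _)) tendsto_id)
    (tendsto_const_div_atTop_nhds_zero_nat 4) ?_ (le_countBelow_mul_div hb)
  filter_upwards [eventually_ge_atTop (place b 1)] with x hx
  exact countBelow_mul_div_le hb (le_topIndex hb hx)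
    (place_topIndex_le ((place_pos hb 1).trans_le hx)) (lt_place_topIndex_succ hb x)

end Density

end MixedRadix

open MixedRadix

theorem stmt3_general (b : ℕ → ℕ) (hb : ∀ j, 1 ≤ j → 2 ≤ b j) :
    ∃ A B : Set ℕ, AddComp A B ∧
      limsup (fun x : ℕ => ((countBelow A x : ℝ) * countBelow B x) / x) atTop
        = limsup (fun k : ℕ => 2 / (1 + Dk b k)) atTop ∧
      {x : ℕ | 0 < x ∧ countBelow A x * countBelow B x = x + 1}.Infinite := by
  refine ⟨evenDigitSet b, oddDigitSet b, addComp_evenDigitSet_oddDigitSet hb, ?_, ?_⟩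
  · simp_rw [two_div_one_add_Dk hb]
    exact limsup_countBelow_mul_div hb
  · refine Set.infinite_of_forall_exists_gt fun a => ?_
    have := lt_place hb (a + 1)
    refine ⟨place b (a + 1) - 1, ⟨by omega, ?_⟩, by omega⟩
    rw [countBelow_mul_countBelow hb, largeSums_place_sub_one hb, card_empty]

theorem stmt3 (b : ℕ → ℕ) (hb0 : b 0 = 1) (hb : ∀ j, 1 ≤ j → 2 ≤ b j) :
    ∃ A B : Set ℕ, AddComp A B ∧
      limsup (fun x : ℕ => ((countBelow A x : ℝ) * countBelow B x) / x) atTop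
        = limsup (fun k : ℕ => 2 / (1 + Dk b k)) atTop ∧
      {x : ℕ | 0 < x ∧ countBelow A x * countBelow B x = x + 1}.Infinite :=
  stmt3_general b hb
end

section
/- Let {b_j} satisfy b_0 = 1 and b_j ≥ 2 for j ≥ 1, and let A, B, y_k be as in the mixed-radix construction. If x ∈ A has the form x = ε_0 + ε_2 a_2 + ε_4 a_4 + ⋯ + ε_{2k−2} a_{2k−2} + ε_{2k} a_{2k} with 0 ≤ ε_{2j} ≤ b_{2j+1} − 1 and ε_{2k} ≥ 1, then A(x)B(x)/x ≤ A(y_k)B(y_k)/y_k. -/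
open Filter

/-- `aSeq b j = Π_{i=0}^{j} b_i`. -/
def aSeq (b : ℕ → ℕ) (j : ℕ) : ℕ := ∏ i ∈ Finset.range (j + 1), b i

/-- The set of non-negative integers using only even-indexed digits in the
mixed-radix system associated to `b`. -/
def mixA (b : ℕ → ℕ) : Set ℕ :=
  { m | ∃ N : ℕ, ∃ ε : ℕ → ℕ, (∀ j, ε j ≤ b (2 * j + 1) - 1) ∧
      m = ∑ j ∈ Finset.range N, ε j * aSeq b (2 * j) }

/-- The set of non-negative integers using only odd-indexed digits in the
mixed-radix system associated to `b`. -/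
def mixB (b : ℕ → ℕ) : Set ℕ :=
  { m | ∃ N : ℕ, ∃ ε : ℕ → ℕ, (∀ j, ε j ≤ b (2 * j + 2) - 1) ∧
      m = ∑ j ∈ Finset.range N, ε j * aSeq b (2 * j + 1) }

/-- `yk b k = (b_1-1) + (b_3-1)a_2 + ⋯ + (b_{2k-1}-1)a_{2k-2} + a_{2k}`. -/
def yk (b : ℕ → ℕ) (k : ℕ) : ℕ :=
  (∑ i ∈ Finset.range k, (b (2 * i + 1) - 1) * aSeq b (2 * i)) + aSeq b (2 * k)

/-!
`A` and `B` are both sets of digit sums `∑ δⱼ wⱼ` with digits `δⱼ < Bⱼ` and weights satisfying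
`Bⱼ wⱼ ≤ wⱼ₊₁`, so the sums with `n` digits lie below `wₙ` and are ordered lexicographically.
Hence for `x = ∑_{j ≤ k} εⱼ a_{2j}` we get `A(x) = 1 + ∑ εⱼ b₁b₃⋯b_{2j-1}`, and, because
`a_{2k} ≤ x < a_{2k+1}`, `B(x) = b₂b₄⋯b_{2k}`, the same value as at `x = y_k`, where moreover
`A(y_k) = 2 b₁b₃⋯b_{2k-1}`. Writing the digits of `y_k` below position `k` as `εⱼ + δⱼ`, the
inequality `A(x) y_k ≤ A(y_k) x` comes down to `2 ∑ δⱼ a_{2j} ≤ (∑ δⱼ b₁b₃⋯b_{2j-1}) B(x)`, which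
holds since `a_{2j} = (b₁b₃⋯b_{2j-1})(b₂b₄⋯b_{2j})` and `2 b₂b₄⋯b_{2j} ≤ b₂b₄⋯b_{2k}` for `j < k`.
-/

namespace MixedRadix

open Finset

theorem add_mul_lt_mul {m w d B : ℕ} (hm : m < w) (hd : d < B) : m + d * w < B * w := by
  nlinarith

theorem add_mul_le_add_mul_iff {m x w d e : ℕ} (hm : m < w) (hx : x < w) :
    m + d * w ≤ x + e * w ↔ d < e ∨ d = e ∧ m ≤ x := by
  rcases lt_trichotomy d e with h | rfl | h
  · simp only [h, true_or, iff_true]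
    nlinarith
  · simp
  · simp only [h.not_gt, h.ne', false_or, false_and, iff_false, not_le]
    nlinarith

theorem sum_pred_mul_prod_add_one {Bs : ℕ → ℕ} (hB : ∀ j, 0 < Bs j) (n : ℕ) :
    ∑ j ∈ range n, (Bs j - 1) * ∏ i ∈ range j, Bs i + 1 = ∏ j ∈ range n, Bs j := by
  induction n with
  | zero => rfl
  | succ n ih =>
    rw [sum_range_succ, add_right_comm, ih, prod_range_succ, Nat.sub_one_mul, mul_comm,
      Nat.add_sub_cancel' (Nat.le_mul_of_pos_right _ (hB n))]

theorem two_mul_prod_le {Bs : ℕ → ℕ} (hB : ∀ j, 2 ≤ Bs j) {j k : ℕ} (hjk : j < k) :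
    2 * ∏ i ∈ range j, Bs i ≤ ∏ i ∈ range k, Bs i :=
  calc 2 * ∏ i ∈ range j, Bs i
      ≤ ∏ i ∈ range (j + 1), Bs i := by rw [prod_range_succ, mul_comm]; gcongr; exact hB j
    _ ≤ ∏ i ∈ range k, Bs i :=
      Nat.le_of_dvd (prod_pos fun i _ => by have := hB i; omega)
        (prod_dvd_prod_of_subset _ _ _ (range_subset_range.2 hjk))

variable (Bs w : ℕ → ℕ)

def digitSums : ℕ → Finset ℕ
  | 0 => {0}
  | n + 1 => (digitSums n ×ˢ range (Bs n)).image fun p => p.1 + p.2 * w n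

def mixSet : Set ℕ :=
  { m | ∃ N : ℕ, ∃ ε : ℕ → ℕ, (∀ j, ε j ≤ Bs j - 1) ∧ m = ∑ j ∈ range N, ε j * w j }

variable {Bs w}

theorem mem_digitSums_succ {n m : ℕ} :
    m ∈ digitSums Bs w (n + 1) ↔ ∃ m' ∈ digitSums Bs w n, ∃ d < Bs n, m' + d * w n = m := by
  simp [digitSums, and_assoc]

theorem sum_mem_digitSums {n : ℕ} {δ : ℕ → ℕ} (hδ : ∀ j < n, δ j < Bs j) :
    ∑ j ∈ range n, δ j * w j ∈ digitSums Bs w n := by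
  induction n with
  | zero => simp [digitSums]
  | succ n ih =>
    rw [sum_range_succ]
    exact mem_digitSums_succ.2 ⟨_, ih fun j hj => hδ j (by omega), δ n, hδ n (by omega), rfl⟩

theorem mem_digitSums_iff (hB : ∀ j, 0 < Bs j) {n m : ℕ} :
    m ∈ digitSums Bs w n ↔ ∃ ε : ℕ → ℕ, (∀ j, ε j ≤ Bs j - 1) ∧ m = ∑ j ∈ range n, ε j * w j := by
  constructor
  · intro hm
    induction n generalizing m with
    | zero => exact ⟨0, fun _ => Nat.zero_le _, by simpa [digitSums] using hm⟩
    | succ n ih =>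
      obtain ⟨m', hm', d, hd, rfl⟩ := mem_digitSums_succ.1 hm
      obtain ⟨ε, hε, rfl⟩ := ih hm'
      refine ⟨Function.update ε n d, fun j => ?_, ?_⟩
      · rcases eq_or_ne j n with rfl | hj
        · simp only [Function.update_self]; omega
        · simpa [hj] using hε j
      · rw [sum_range_succ, Function.update_self]
        congr 1
        exact sum_congr rfl fun j hj => by rw [Function.update_of_ne (mem_range.1 hj).ne]
  · rintro ⟨ε, hε, rfl⟩
    exact sum_mem_digitSums fun j _ => by have := hε j; have := hB j; omega

theorem digitSums_mono (hB : ∀ j, 0 < Bs j) : Monotone (digitSums Bs w) :=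
  monotone_nat_of_le_succ fun n m hm => mem_digitSums_succ.2 ⟨m, hm, 0, hB n, by simp⟩

/-- With `u = w` this is the bound `m < w n`; a smaller `u` gives the sharper bound needed for
`B`, whose `n`-digit sums lie below `a_{2n}`. -/
theorem lt_of_mem_digitSums {u : ℕ → ℕ} (hu0 : 0 < u 0) (hu : ∀ j, u j ≤ w j)
    (hwu : ∀ j, Bs j * w j ≤ u (j + 1)) {n m : ℕ} (hm : m ∈ digitSums Bs w n) : m < u n := by
  induction n generalizing m with
  | zero =>
    rw [digitSums, mem_singleton] at hm
    simpa [hm] using hu0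
  | succ n ih =>
    obtain ⟨m', hm', d, hd, rfl⟩ := mem_digitSums_succ.1 hm
    exact (add_mul_lt_mul ((ih hm').trans_le (hu n)) hd).trans_le (hwu n)

section Weights

variable (hw0 : 0 < w 0) (hw : ∀ j, Bs j * w j ≤ w (j + 1))
include hw0 hw

theorem lt_weight_of_mem_digitSums {n m : ℕ} (hm : m ∈ digitSums Bs w n) : m < w n :=
  lt_of_mem_digitSums hw0 (fun _ => le_rfl) hw hm

theorem injOn_digitSums_succ (n : ℕ) :
    Set.InjOn (fun p : ℕ × ℕ => p.1 + p.2 * w n) (digitSums Bs w n ×ˢ range (Bs n) : Finset _) := by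
  rintro ⟨m, d⟩ hmd ⟨m', d'⟩ hmd' h
  simp only [coe_product, Set.mem_prod, mem_coe] at hmd hmd' h
  have hm := lt_weight_of_mem_digitSums hw0 hw hmd.1
  have hm' := lt_weight_of_mem_digitSums hw0 hw hmd'.1
  have h₁ := (add_mul_le_add_mul_iff hm hm').1 h.le
  have h₂ := (add_mul_le_add_mul_iff hm' hm).1 h.ge
  ext <;> dsimp <;> omega

theorem card_digitSums (n : ℕ) : #(digitSums Bs w n) = ∏ j ∈ range n, Bs j := by
  induction n with
  | zero => rfl
  | succ n ih =>
    rw [digitSums, card_image_of_injOn (injOn_digitSums_succ hw0 hw n), card_product, card_range,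
      ih, prod_range_succ]

theorem card_filter_digitSums_succ {n x e : ℕ} (hx : x < w n) (he : e < Bs n) :
    #((digitSums Bs w (n + 1)).filter (· ≤ x + e * w n))
      = e * ∏ j ∈ range n, Bs j + #((digitSums Bs w n).filter (· ≤ x)) := by
  have hsplit : (digitSums Bs w n ×ˢ range (Bs n)).filter (fun p => p.1 + p.2 * w n ≤ x + e * w n)
      = digitSums Bs w n ×ˢ range e ∪ (digitSums Bs w n).filter (· ≤ x) ×ˢ {e} := by
    ext ⟨m, d⟩
    simp only [mem_filter, mem_product, mem_range, mem_union, mem_singleton]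
    constructor
    · rintro ⟨⟨hm, hd⟩, hle⟩
      rcases (add_mul_le_add_mul_iff (lt_weight_of_mem_digitSums hw0 hw hm) hx).1 hle
        with h | ⟨rfl, h⟩
      · exact Or.inl ⟨hm, h⟩
      · exact Or.inr ⟨⟨hm, h⟩, rfl⟩
    · rintro (⟨hm, hd⟩ | ⟨⟨hm, h⟩, rfl⟩)
      · exact ⟨⟨hm, hd.trans he⟩,
          (add_mul_le_add_mul_iff (lt_weight_of_mem_digitSums hw0 hw hm) hx).2 (Or.inl hd)⟩
      · exact ⟨⟨hm, he⟩, by omega⟩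
  have hdisj : Disjoint (digitSums Bs w n ×ˢ range e) ((digitSums Bs w n).filter (· ≤ x) ×ˢ {e}) :=
    disjoint_left.2 fun p hp hp' => by
      simp only [mem_product, mem_range, mem_singleton] at hp hp'
      omega
  rw [digitSums, filter_image, card_image_of_injOn ((injOn_digitSums_succ hw0 hw n).mono
      (by simp only [coe_filter]; exact fun p hp => hp.1)), hsplit, card_union_of_disjoint hdisj,
    card_product, card_product, card_range, card_singleton, card_digitSums hw0 hw, mul_one, mul_comm]

theorem card_filter_le_sum {n : ℕ} {δ : ℕ → ℕ} (hδ : ∀ j < n, δ j < Bs j) :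
    #((digitSums Bs w n).filter (· ≤ ∑ j ∈ range n, δ j * w j))
      = ∑ j ∈ range n, δ j * ∏ i ∈ range j, Bs i + 1 := by
  induction n with
  | zero => rfl
  | succ n ih =>
    have hδ' : ∀ j < n, δ j < Bs j := fun j hj => hδ j (by omega)
    rw [sum_range_succ, sum_range_succ, card_filter_digitSums_succ hw0 hw
      (lt_weight_of_mem_digitSums hw0 hw (sum_mem_digitSums hδ')) (hδ n (by omega)), ih hδ']
    ring

end Weights

section Count

variable (hB : ∀ j, 0 < Bs j) (hw : ∀ j, Bs j * w j ≤ w (j + 1))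
include hB hw

theorem mem_digitSums_of_lt {N n m : ℕ} (hm : m ∈ digitSums Bs w N) (hmn : m < w n) :
    m ∈ digitSums Bs w n := by
  induction N generalizing m with
  | zero => exact digitSums_mono hB (Nat.zero_le n) hm
  | succ N ih =>
    rcases lt_or_ge N n with hN | hN
    · exact digitSums_mono hB hN hm
    obtain ⟨m', hm', d, -, rfl⟩ := mem_digitSums_succ.1 hm
    have hwmono : Monotone w := monotone_nat_of_le_succ fun j =>
      (Nat.le_mul_of_pos_left _ (hB j)).trans (hw j)
    obtain rfl : d = 0 := by
      by_contra hd
      have := Nat.le_mul_of_pos_left (w N) (Nat.pos_of_ne_zero hd)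
      have := hwmono hN
      omega
    simpa using ih hm' (by simpa using hmn)

theorem countBelow_mixSet {n x : ℕ} (hx : x < w n) :
    countBelow (mixSet Bs w) x = #((digitSums Bs w n).filter (· ≤ x)) := by
  rw [countBelow, ← Set.ncard_coe_finset]
  congr 1
  ext m
  simp only [mixSet, Set.mem_inter_iff, Set.mem_ofPred_eq, Set.mem_Iic, coe_filter,
    ← mem_digitSums_iff hB]
  constructor
  · rintro ⟨⟨N, hN⟩, hmx⟩
    exact ⟨mem_digitSums_of_lt hB hw hN (by omega), hmx⟩
  · rintro ⟨hm, hmx⟩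
    exact ⟨⟨n, hm⟩, hmx⟩

end Count

end MixedRadix

open Finset MixedRadix

theorem aSeq_succ (b : ℕ → ℕ) (n : ℕ) : aSeq b (n + 1) = aSeq b n * b (n + 1) :=
  prod_range_succ _ _

theorem mixA_eq_mixSet (b : ℕ → ℕ) :
    mixA b = mixSet (fun j => b (2 * j + 1)) (fun j => aSeq b (2 * j)) := rfl

theorem mixB_eq_mixSet (b : ℕ → ℕ) :
    mixB b = mixSet (fun j => b (2 * j + 2)) (fun j => aSeq b (2 * j + 1)) := rfl

theorem aSeq_two_mul {b : ℕ → ℕ} (hb0 : b 0 = 1) (n : ℕ) :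
    aSeq b (2 * n) = (∏ j ∈ range n, b (2 * j + 1)) * ∏ j ∈ range n, b (2 * j + 2) := by
  induction n with
  | zero => simp [aSeq, hb0]
  | succ n ih =>
    rw [show 2 * (n + 1) = 2 * n + 1 + 1 by ring, aSeq_succ, aSeq_succ, ih, prod_range_succ,
      prod_range_succ]
    ring

theorem yk_eq (b : ℕ → ℕ) (k : ℕ) :
    yk b k = ∑ j ∈ range k, (b (2 * j + 1) - 1) * aSeq b (2 * j) + 1 * aSeq b (2 * k) := by
  rw [one_mul, yk]

section

variable {b : ℕ → ℕ} (hpos : ∀ j, 0 < b j)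
include hpos

theorem aSeq_pos (n : ℕ) : 0 < aSeq b n :=
  prod_pos fun j _ => hpos j

theorem aSeq_le_succ (n : ℕ) : aSeq b n ≤ aSeq b (n + 1) := by
  rw [aSeq_succ]
  exact Nat.le_mul_of_pos_right _ (hpos _)

theorem mul_aSeq_two_mul_le (j : ℕ) : b (2 * j + 1) * aSeq b (2 * j) ≤ aSeq b (2 * (j + 1)) := by
  rw [mul_comm, ← aSeq_succ]
  exact aSeq_le_succ hpos _

theorem sum_lt_aSeq_two_mul {k : ℕ} {δ : ℕ → ℕ} (hδ : ∀ j < k, δ j < b (2 * j + 1)) :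
    ∑ j ∈ range k, δ j * aSeq b (2 * j) < aSeq b (2 * k) :=
  lt_weight_of_mem_digitSums (w := fun j => aSeq b (2 * j)) (aSeq_pos hpos 0)
    (mul_aSeq_two_mul_le hpos) (sum_mem_digitSums hδ)

theorem sum_pred_mul_prod_odd_add_one (k : ℕ) :
    ∑ j ∈ range k, (b (2 * j + 1) - 1) * ∏ i ∈ range j, b (2 * i + 1) + 1
      = ∏ j ∈ range k, b (2 * j + 1) :=
  sum_pred_mul_prod_add_one (fun _ => hpos _) k

theorem countBelow_mixA {k e : ℕ} {ε : ℕ → ℕ} (hε : ∀ j < k, ε j < b (2 * j + 1))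
    (he : e < b (2 * k + 1)) :
    countBelow (mixA b) (∑ j ∈ range k, ε j * aSeq b (2 * j) + e * aSeq b (2 * k))
      = e * ∏ j ∈ range k, b (2 * j + 1) + ∑ j ∈ range k, ε j * ∏ i ∈ range j, b (2 * i + 1) + 1 := by
  have hlt := sum_lt_aSeq_two_mul hpos hε
  rw [mixA_eq_mixSet, countBelow_mixSet (fun _ => hpos _) (mul_aSeq_two_mul_le hpos)
      ((add_mul_lt_mul hlt he).trans_le (mul_aSeq_two_mul_le hpos k)),
    card_filter_digitSums_succ (w := fun j => aSeq b (2 * j)) (aSeq_pos hpos 0)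
      (mul_aSeq_two_mul_le hpos) hlt he,
    card_filter_le_sum (w := fun j => aSeq b (2 * j)) (aSeq_pos hpos 0)
      (mul_aSeq_two_mul_le hpos) hε, add_assoc]

theorem countBelow_mixB {k e : ℕ} {ε : ℕ → ℕ} (hε : ∀ j < k, ε j < b (2 * j + 1))
    (he : e < b (2 * k + 1)) (he1 : 1 ≤ e) :
    countBelow (mixB b) (∑ j ∈ range k, ε j * aSeq b (2 * j) + e * aSeq b (2 * k))
      = ∏ j ∈ range k, b (2 * j + 2) := by
  have hwB : ∀ j, b (2 * j + 2) * aSeq b (2 * j + 1) ≤ aSeq b (2 * (j + 1)) := fun j =>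
    (mul_comm _ _).trans_le (aSeq_succ b _).ge
  have hwB' : ∀ j, b (2 * j + 2) * aSeq b (2 * j + 1) ≤ aSeq b (2 * (j + 1) + 1) := fun j =>
    (hwB j).trans (aSeq_le_succ hpos _)
  have hx : ∑ j ∈ range k, ε j * aSeq b (2 * j) + e * aSeq b (2 * k) < aSeq b (2 * k + 1) :=
    (add_mul_lt_mul (sum_lt_aSeq_two_mul hpos hε) he).trans_eq (by rw [aSeq_succ, mul_comm])
  rw [mixB_eq_mixSet, countBelow_mixSet (fun _ => hpos _) hwB' hx, filter_true_of_mem,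
    card_digitSums (w := fun j => aSeq b (2 * j + 1)) (aSeq_pos hpos _) hwB']
  intro m hm
  have := lt_of_mem_digitSums (u := fun j => aSeq b (2 * j)) (aSeq_pos hpos 0)
    (fun _ => aSeq_le_succ hpos _) hwB hm
  have := Nat.le_mul_of_pos_left (aSeq b (2 * k)) he1
  omega

theorem countBelow_mixA_yk {k : ℕ} (hk : 1 < b (2 * k + 1)) :
    countBelow (mixA b) (yk b k) = 2 * ∏ j ∈ range k, b (2 * j + 1) := by
  rw [yk_eq, countBelow_mixA hpos (fun j _ => Nat.sub_one_lt (hpos _).ne') hk, add_assoc,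
    sum_pred_mul_prod_odd_add_one hpos, one_mul, two_mul]

theorem countBelow_mixB_yk {k : ℕ} (hk : 1 < b (2 * k + 1)) :
    countBelow (mixB b) (yk b k) = ∏ j ∈ range k, b (2 * j + 2) := by
  rw [yk_eq, countBelow_mixB hpos (fun j _ => Nat.sub_one_lt (hpos _).ne') hk le_rfl]

theorem mul_yk_le (hb0 : b 0 = 1) (heven : ∀ j, 2 ≤ b (2 * j + 2)) {k e : ℕ} {ε : ℕ → ℕ}
    (hε : ∀ j < k, ε j ≤ b (2 * j + 1) - 1) (he : 1 ≤ e) :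
    (e * ∏ j ∈ range k, b (2 * j + 1) + ∑ j ∈ range k, ε j * ∏ i ∈ range j, b (2 * i + 1) + 1)
        * yk b k
      ≤ 2 * (∏ j ∈ range k, b (2 * j + 1))
        * (∑ j ∈ range k, ε j * aSeq b (2 * j) + e * aSeq b (2 * k)) := by
  set T := ∑ j ∈ range k, ε j * ∏ i ∈ range j, b (2 * i + 1)
  set S := ∑ j ∈ range k, ε j * aSeq b (2 * j)
  set U := ∑ j ∈ range k, (b (2 * j + 1) - 1 - ε j) * ∏ i ∈ range j, b (2 * i + 1)
  set D := ∑ j ∈ range k, (b (2 * j + 1) - 1 - ε j) * aSeq b (2 * j)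
  have hcompl : ∀ j ∈ range k, ε j + (b (2 * j + 1) - 1 - ε j) = b (2 * j + 1) - 1 :=
    fun j hj => Nat.add_sub_cancel' (hε j (mem_range.1 hj))
  have hTU : T + U + 1 = ∏ j ∈ range k, b (2 * j + 1) := by
    rw [← sum_add_distrib, ← sum_pred_mul_prod_odd_add_one hpos]
    congr 1
    exact sum_congr rfl fun j hj => by rw [← add_mul, hcompl j hj]
  have hSD : S + D = ∑ j ∈ range k, (b (2 * j + 1) - 1) * aSeq b (2 * j) := by
    rw [← sum_add_distrib]
    exact sum_congr rfl fun j hj => by rw [← add_mul, hcompl j hj]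
  set P := ∏ j ∈ range k, b (2 * j + 1)
  set Q := ∏ j ∈ range k, b (2 * j + 2)
  have hPQ : aSeq b (2 * k) = P * Q := aSeq_two_mul hb0 k
  have hy : yk b k = S + D + P * Q := by rw [yk, hSD, hPQ]
  have hSDle : S + D ≤ P * Q := by
    rw [hSD, ← hPQ]
    exact (sum_lt_aSeq_two_mul hpos fun j _ => Nat.sub_one_lt (hpos _).ne').le
  have hDU : 2 * D ≤ U * Q := by
    rw [mul_sum, sum_mul]
    refine sum_le_sum fun j hj => ?_
    rw [aSeq_two_mul hb0]
    calc 2 * ((b (2 * j + 1) - 1 - ε j) * ((∏ i ∈ range j, b (2 * i + 1))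
          * ∏ i ∈ range j, b (2 * i + 2)))
        = (b (2 * j + 1) - 1 - ε j) * (∏ i ∈ range j, b (2 * i + 1))
          * (2 * ∏ i ∈ range j, b (2 * i + 2)) := by ring
      _ ≤ _ := Nat.mul_le_mul_left _ (two_mul_prod_le heven (mem_range.1 hj))
  rw [hy, hPQ]
  clear_value T S U D P Q
  subst hTU
  obtain ⟨f, rfl⟩ : ∃ f, e = f + 1 := ⟨e - 1, by omega⟩
  -- with `P = T + U + 1`, the difference of the two sides is
  -- `P (U Q - 2 D) + U (S + D) + f P (P Q - S - D)`
  nlinarith [Nat.mul_le_mul_left (T + U + 1) hDU, Nat.mul_le_mul_left (f * (T + U + 1)) hSDle,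
    Nat.zero_le (U * (S + D))]

end

theorem stmt9_general (b : ℕ → ℕ) (hb0 : b 0 = 1) (hb : ∀ j, 1 ≤ j → 2 ≤ b j)
    (k : ℕ) (ε : ℕ → ℕ)
    (hε : ∀ j, j ≤ k → ε j ≤ b (2 * j + 1) - 1) (hεk : 1 ≤ ε k)
    (x : ℕ) (hx : x = ∑ j ∈ Finset.range (k + 1), ε j * aSeq b (2 * j)) :
    ((countBelow (mixA b) x : ℝ) * countBelow (mixB b) x) / x
      ≤ ((countBelow (mixA b) (yk b k) : ℝ) * countBelow (mixB b) (yk b k)) / (yk b k) := by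
  have hpos : ∀ j, 0 < b j
    | 0 => by omega
    | j + 1 => by have := hb (j + 1) (by omega); omega
  have hdigit : ∀ j ≤ k, ε j < b (2 * j + 1) := fun j hj => by
    have := hε j hj; have := hb (2 * j + 1) (by omega); omega
  have htop : 1 < b (2 * k + 1) := hb (2 * k + 1) (by omega)
  rw [sum_range_succ] at hx
  have hx0 : 0 < x := by
    have := Nat.le_mul_of_pos_left (aSeq b (2 * k)) hεk
    have := aSeq_pos hpos (2 * k)
    omega
  have hy0 : 0 < yk b k := by
    have := aSeq_pos hpos (2 * k)
    rw [yk]; omega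
  have key := mul_yk_le hpos hb0 (fun j => hb _ (by omega)) (fun j hj => hε j hj.le) hεk
  have key' := Nat.mul_le_mul_right (∏ j ∈ range k, b (2 * j + 2)) key
  rw [← hx, mul_right_comm, mul_right_comm (2 * _)] at key'
  rw [hx, countBelow_mixA hpos (fun j hj => hdigit j hj.le) (hdigit k le_rfl),
    countBelow_mixB hpos (fun j hj => hdigit j hj.le) (hdigit k le_rfl) hεk, ← hx,
    countBelow_mixA_yk hpos htop, countBelow_mixB_yk hpos htop,
    div_le_div_iff₀ (by exact_mod_cast hx0) (by exact_mod_cast hy0)]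
  exact_mod_cast key'

theorem stmt9 (b : ℕ → ℕ) (hb0 : b 0 = 1) (hb : ∀ j, 1 ≤ j → 2 ≤ b j)
    (k : ℕ) (hk : 1 ≤ k) (ε : ℕ → ℕ)
    (hε : ∀ j, j ≤ k → ε j ≤ b (2 * j + 1) - 1) (hεk : 1 ≤ ε k)
    (x : ℕ) (hx : x = ∑ j ∈ Finset.range (k + 1), ε j * aSeq b (2 * j)) :
    ((countBelow (mixA b) x : ℝ) * countBelow (mixB b) x) / x
      ≤ ((countBelow (mixA b) (yk b k) : ℝ) * countBelow (mixB b) (yk b k)) / (yk b k) :=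
  stmt9_general b hb0 hb k ε hε hεk x hx
end

section
/- Let a, b be integers with b > a ≥ 2 and b ≥ a + 2. The map sending a sequence {d_i} with each d_i ∈ {a, b} to Δ({d_i}) = lim_{j→+∞} Σ_{i=0}^{j} (−1)^i / (d_1 d_2 ⋯ d_i) is injective: if {d_i} and {d'_i} are different sequences with values in {a, b}, then Δ({d_i}) ≠ Δ({d'_i}). -/
/-!
Writing `σ` for the shift, `Δ(d) = 1 - Δ(σd) / d₁`. Since `x ↦ 1 - x / c` maps `[0, 1]` into
itself for `c ≥ 1`, every `Δ` lies in `[0, 1]`, and two more applications of the recursion give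
`Δ ∈ [1 - 1/a, 1 - (1 - 1/a)/b]` for sequences with values in `[a, b]`. So if `d₁ = a` and
`d'₁ = b`, then `Δ(σd)/a ≥ (1 - 1/a)/a > (1 - (1 - 1/a)/b)/b ≥ Δ(σd')/b`, the middle inequality
being where `b ≥ a + 2` enters, and `Δ(d) < Δ(d')`. Thus equal values force equal first terms,
then (cancelling them in the recursion) equal shifted values, and induction gives `d = d'`.
-/

open Filter Topology Finset

/-- With `e t = d_{t+1}` (sequences are indexed from `0` here), `deltaSum e` is `Δ({d_i})`. -/
noncomputable def deltaTerm (e : ℕ → ℝ) (i : ℕ) : ℝ := (-1) ^ i / ∏ t ∈ range i, e t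

noncomputable def deltaSum (e : ℕ → ℝ) : ℝ := ∑' i, deltaTerm e i

lemma prod_Icc_one_eq_prod_range (f : ℕ → ℝ) (i : ℕ) :
    ∏ t ∈ Icc 1 i, f t = ∏ t ∈ range i, f (t + 1) := by
  rw [range_eq_Ico, prod_Ico_add' f 0 i 1, zero_add, Ico_add_one_right_eq_Icc]

lemma deltaTerm_zero (e : ℕ → ℝ) : deltaTerm e 0 = 1 := by
  simp [deltaTerm]

lemma deltaTerm_succ (e : ℕ → ℝ) (i : ℕ) :
    deltaTerm e (i + 1) = -deltaTerm (fun t ↦ e (t + 1)) i / e 0 := by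
  simp only [deltaTerm, prod_range_succ', pow_succ]
  ring

lemma sum_range_succ_deltaTerm (e : ℕ → ℝ) (n : ℕ) :
    ∑ i ∈ range (n + 1), deltaTerm e i =
      1 - (∑ i ∈ range n, deltaTerm (fun t ↦ e (t + 1)) i) / e 0 := by
  simp only [sum_range_succ', deltaTerm_succ, deltaTerm_zero, neg_div, sum_neg_distrib, sum_div]
  ring

lemma deltaSum_eq {e : ℕ → ℝ} (hs : Summable (deltaTerm e)) :
    deltaSum e = 1 - deltaSum (fun t ↦ e (t + 1)) / e 0 := by
  simp only [deltaSum, hs.tsum_eq_zero_add, deltaTerm_zero, deltaTerm_succ, neg_div, tsum_neg,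
    tsum_div_const]
  ring

lemma summable_deltaTerm {a : ℝ} (ha : 1 < a) {e : ℕ → ℝ} (he : ∀ t, a ≤ e t) :
    Summable (deltaTerm e) := by
  refine .of_norm_bounded (summable_geometric_of_lt_one (by positivity) (inv_lt_one_of_one_lt₀ ha))
    fun i ↦ ?_
  have hprod : a ^ i ≤ ∏ t ∈ range i, e t := by
    simpa using Finset.prod_le_prod (s := range i) (fun _ _ ↦ by linarith) fun t _ ↦ he t
  rw [deltaTerm, norm_div, norm_pow, norm_neg, norm_one, one_pow, inv_pow,
    Real.norm_of_nonneg ((by positivity : (0 : ℝ) ≤ a ^ i).trans hprod), one_div]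
  gcongr

lemma one_sub_div_mem_Icc {a b c l x : ℝ} (ha : 0 < a) (hc : c ∈ Set.Icc a b) (hl : 0 ≤ l)
    (hx : x ∈ Set.Icc l 1) : 1 - x / c ∈ Set.Icc (1 - a⁻¹) (1 - l / b) := by
  obtain ⟨hac, hcb⟩ := hc
  have hc0 : 0 < c := ha.trans_le hac
  constructor
  · calc 1 - a⁻¹ ≤ 1 - 1 / c := by gcongr; rw [one_div]; exact inv_anti₀ ha hac
      _ ≤ 1 - x / c := by gcongr; exact hx.2
  · calc 1 - x / c ≤ 1 - l / c := by gcongr; exact hx.1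
      _ ≤ 1 - l / b := by gcongr

lemma sum_range_deltaTerm_mem_Icc (n : ℕ) {e : ℕ → ℝ} (he : ∀ t, 1 ≤ e t) :
    ∑ i ∈ range n, deltaTerm e i ∈ Set.Icc (0 : ℝ) 1 := by
  induction n generalizing e with
  | zero => simp
  | succ n ih =>
    rw [sum_range_succ_deltaTerm]
    simpa using one_sub_div_mem_Icc one_pos ⟨he 0, le_rfl⟩ le_rfl (ih fun t ↦ he (t + 1))

lemma deltaSum_mem_Icc_zero_one {e : ℕ → ℝ} (hs : Summable (deltaTerm e)) (he : ∀ t, 1 ≤ e t) :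
    deltaSum e ∈ Set.Icc (0 : ℝ) 1 :=
  isClosed_Icc.mem_of_tendsto hs.hasSum.tendsto_sum_nat
    (.of_forall fun n ↦ sum_range_deltaTerm_mem_Icc n he)

lemma deltaSum_mem_Icc {a b : ℝ} (ha : 1 < a) {e : ℕ → ℝ} (he : ∀ t, e t ∈ Set.Icc a b) :
    deltaSum e ∈ Set.Icc (1 - a⁻¹) (1 - (1 - a⁻¹) / b) := by
  have hs {e : ℕ → ℝ} (he : ∀ t, e t ∈ Set.Icc a b) : Summable (deltaTerm e) :=
    summable_deltaTerm ha fun t ↦ (he t).1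
  have hL {e : ℕ → ℝ} (he : ∀ t, e t ∈ Set.Icc a b) : deltaSum e ∈ Set.Icc (1 - a⁻¹) 1 := by
    rw [deltaSum_eq (hs he)]
    simpa using one_sub_div_mem_Icc (by linarith) (he 0) le_rfl
      (deltaSum_mem_Icc_zero_one (hs fun t ↦ he (t + 1)) fun t ↦ ha.le.trans (he (t + 1)).1)
  rw [deltaSum_eq (hs he)]
  exact one_sub_div_mem_Icc (by linarith) (he 0) (sub_nonneg.2 (inv_le_one_of_one_le₀ ha.le))
    (hL fun t ↦ he (t + 1))

lemma one_sub_one_sub_inv_div_div_lt {a b : ℝ} (ha : 2 ≤ a) (hb : a + 2 ≤ b) :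
    (1 - (1 - a⁻¹) / b) / b < (1 - a⁻¹) / a := by
  have ha0 : 0 < a := by linarith
  have hb0 : 0 < b := by linarith
  rw [div_lt_div_iff₀ hb0 ha0]
  field_simp
  nlinarith [mul_le_mul_of_nonneg_left hb (mul_nonneg (by linarith) hb0.le : (0 : ℝ) ≤ (a - 1) * b)]

lemma deltaSum_lt_of_head {a b : ℝ} (ha : 2 ≤ a) (hb : a + 2 ≤ b) {e e' : ℕ → ℝ}
    (he : ∀ t, e t ∈ Set.Icc a b) (he' : ∀ t, e' t ∈ Set.Icc a b) (h0 : e 0 = a) (h0' : e' 0 = b) :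
    deltaSum e < deltaSum e' := by
  have hL := (deltaSum_mem_Icc (by linarith) fun t ↦ he (t + 1)).1
  have hU := (deltaSum_mem_Icc (by linarith) fun t ↦ he' (t + 1)).2
  rw [deltaSum_eq (summable_deltaTerm (by linarith) fun t ↦ (he t).1),
    deltaSum_eq (summable_deltaTerm (by linarith) fun t ↦ (he' t).1), h0, h0']
  have hb0 : 0 < b := by linarith
  calc 1 - deltaSum (fun t ↦ e (t + 1)) / a ≤ 1 - (1 - a⁻¹) / a := by gcongr
    _ < 1 - (1 - (1 - a⁻¹) / b) / b := by linarith [one_sub_one_sub_inv_div_div_lt ha hb]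
    _ ≤ 1 - deltaSum (fun t ↦ e' (t + 1)) / b := by gcongr

lemma mem_Icc_of_eq_or_eq {a b x : ℝ} (hab : a ≤ b) (h : x = a ∨ x = b) : x ∈ Set.Icc a b := by
  rcases h with rfl | rfl <;> simp [hab]

lemma head_eq_of_deltaSum_eq {a b : ℝ} (ha : 2 ≤ a) (hb : a + 2 ≤ b) {e e' : ℕ → ℝ}
    (he : ∀ t, e t = a ∨ e t = b) (he' : ∀ t, e' t = a ∨ e' t = b)
    (h : deltaSum e = deltaSum e') : e 0 = e' 0 := by
  have hIcc {e : ℕ → ℝ} (he : ∀ t, e t = a ∨ e t = b) (t : ℕ) : e t ∈ Set.Icc a b :=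
    mem_Icc_of_eq_or_eq (by linarith) (he t)
  rcases he 0 with h0 | h0 <;> rcases he' 0 with h0' | h0'
  · rw [h0, h0']
  · exact absurd h (deltaSum_lt_of_head ha hb (hIcc he) (hIcc he') h0 h0').ne
  · exact absurd h (deltaSum_lt_of_head ha hb (hIcc he') (hIcc he) h0' h0).ne'
  · rw [h0, h0']

theorem deltaSum_injOn {a b : ℝ} (ha : 2 ≤ a) (hb : a + 2 ≤ b) :
    Set.InjOn deltaSum {e | ∀ t, e t = a ∨ e t = b} := by
  intro e he e' he' h
  funext t
  induction t generalizing e e' with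
  | zero => exact head_eq_of_deltaSum_eq ha hb he he' h
  | succ t ih =>
    have h0 := head_eq_of_deltaSum_eq ha hb he he' h
    have hs {e : ℕ → ℝ} (he : ∀ t, e t = a ∨ e t = b) : Summable (deltaTerm e) :=
      summable_deltaTerm (a := a) (by linarith) fun t ↦ (mem_Icc_of_eq_or_eq (by linarith) (he t)).1
    have he0 : e' 0 ≠ 0 := by rcases he' 0 with h | h <;> linarith
    rw [deltaSum_eq (hs he), deltaSum_eq (hs he'), h0] at h
    exact ih (fun t ↦ he (t + 1)) (fun t ↦ he' (t + 1))
      ((div_left_inj' he0).1 (sub_right_injective h))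

lemma tendsto_sum_Icc_deltaSum {f : ℕ → ℝ} (hs : Summable (deltaTerm fun t ↦ f (t + 1))) :
    Tendsto (fun j : ℕ ↦ ∑ i ∈ range (j + 1), (-1 : ℝ) ^ i / ∏ t ∈ Icc 1 i, f t) atTop
      (𝓝 (deltaSum fun t ↦ f (t + 1))) := by
  simp only [prod_Icc_one_eq_prod_range]
  exact hs.hasSum.tendsto_sum_nat.comp (tendsto_add_atTop_nat 1)

theorem stmt14_general (a b : ℕ) (ha : 2 ≤ a) (hb : a + 2 ≤ b)
    (d d' : ℕ → ℕ)
    (hd : ∀ i, 1 ≤ i → d i = a ∨ d i = b)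
    (hd' : ∀ i, 1 ≤ i → d' i = a ∨ d' i = b)
    (hne : ∃ i, 1 ≤ i ∧ d i ≠ d' i)
    (Δ Δ' : ℝ)
    (hΔ : Tendsto (fun j : ℕ => ∑ i ∈ Finset.range (j + 1),
        (-1 : ℝ) ^ i / ∏ t ∈ Finset.Icc 1 i, (d t : ℝ)) atTop (𝓝 Δ))
    (hΔ' : Tendsto (fun j : ℕ => ∑ i ∈ Finset.range (j + 1),
        (-1 : ℝ) ^ i / ∏ t ∈ Finset.Icc 1 i, (d' t : ℝ)) atTop (𝓝 Δ')) :
    Δ ≠ Δ' := by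
  have ha' : (2 : ℝ) ≤ a := by exact_mod_cast ha
  have hb' : (a : ℝ) + 2 ≤ b := by exact_mod_cast hb
  have hmem {d : ℕ → ℕ} (hd : ∀ i, 1 ≤ i → d i = a ∨ d i = b) :
      (fun t ↦ (d (t + 1) : ℝ)) ∈ {e : ℕ → ℝ | ∀ t, e t = a ∨ e t = b} := fun t ↦
    (hd (t + 1) t.succ_pos).imp (congrArg Nat.cast) (congrArg Nat.cast)
  have hlim {d : ℕ → ℕ} (hd : ∀ i, 1 ≤ i → d i = a ∨ d i = b) :=
    tendsto_sum_Icc_deltaSum (f := fun t ↦ (d t : ℝ)) <| summable_deltaTerm one_lt_two fun t ↦ by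
      rcases hmem hd t with h | h <;> linarith
  obtain ⟨i, hi, hdi⟩ := hne
  obtain ⟨k, rfl⟩ := Nat.exists_eq_add_of_le' hi
  intro h
  have hsum : deltaSum (fun t ↦ (d (t + 1) : ℝ)) = deltaSum (fun t ↦ (d' (t + 1) : ℝ)) := by
    rw [← tendsto_nhds_unique hΔ (hlim hd), ← tendsto_nhds_unique hΔ' (hlim hd'), h]
  exact hdi (Nat.cast_injective (congrFun (deltaSum_injOn ha' hb' (hmem hd) (hmem hd') hsum) k))

theorem stmt14 (a b : ℕ) (ha : 2 ≤ a) (hab : a < b) (hb : a + 2 ≤ b)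
    (d d' : ℕ → ℕ)
    (hd : ∀ i, 1 ≤ i → d i = a ∨ d i = b)
    (hd' : ∀ i, 1 ≤ i → d' i = a ∨ d' i = b)
    (hne : ∃ i, 1 ≤ i ∧ d i ≠ d' i)
    (Δ Δ' : ℝ)
    (hΔ : Tendsto (fun j : ℕ => ∑ i ∈ Finset.range (j + 1),
        (-1 : ℝ) ^ i / ∏ t ∈ Finset.Icc 1 i, (d t : ℝ)) atTop (𝓝 Δ))
    (hΔ' : Tendsto (fun j : ℕ => ∑ i ∈ Finset.range (j + 1),
        (-1 : ℝ) ^ i / ∏ t ∈ Finset.Icc 1 i, (d' t : ℝ)) atTop (𝓝 Δ')) :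
    Δ ≠ Δ' :=
  stmt14_general a b ha hb d d' hd hd' hne Δ Δ' hΔ hΔ'
end

section
/- Let a, b, l be integers with b > a ≥ 2, b ≥ a + 2, and l a positive odd number. Let {b_j} (j ≥ 1) be the periodic sequence a, a, …, a (l times), b, a, a, …, a (l times), b, …, with b_0 = 1. Then lim_{k→+∞} D_{(l+1)k} = (1 − 1/a^{l+1}) / (b(1 + 1/a)(1 − 1/(a^l b))), where D_k = Σ_{i=0}^{k−1} (−1)^i (Π_{j=0}^{i} b_{k−j})^{−1}. -/
/-!
Read backwards from index `(l + 1) K`, the sequence `b_{(l+1)K - j}` equals `b` exactly when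
`(l + 1) ∣ j`, so the `i`-th product is `b ^ (i / (l + 1) + 1) * a ^ (i - i / (l + 1))`.
Grouping the `i`-th terms into blocks of length `l + 1` (even, so the signs restart in each block)
turns `D_{(l+1)K}` into the partial sum of a geometric series with ratio `(a ^ l b)⁻¹ < 1`, each
block contributing `b⁻¹ Σ_{r ≤ l} (-a⁻¹) ^ r`.
-/

open Filter Topology

open Finset

lemma prod_range_succ_ite_dvd {M : Type*} [CommMonoid M] (m i : ℕ) (x y : M) :
    ∏ j ∈ range (i + 1), (if m ∣ j then x else y) = x ^ (i / m + 1) * y ^ (i - i / m) := by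
  induction i with
  | zero => simp
  | succ i ih =>
    have hdiv : i / m ≤ i := Nat.div_le_self i m
    rw [prod_range_succ, ih, Nat.succ_div]
    split_ifs with h
    · rw [show i + 1 - (i / m + 1) = i - i / m by omega, pow_succ x (i / m + 1),
        mul_right_comm]
    · rw [add_zero, show i + 1 - i / m = i - i / m + 1 by omega, pow_succ y, mul_assoc]

lemma sum_range_mul_eq_sum_sum {M : Type*} [AddCommMonoid M] (f : ℕ → M) (p K : ℕ) :
    ∑ i ∈ range (p * K), f i = ∑ q ∈ range K, ∑ r ∈ range p, f (p * q + r) := by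
  induction K with
  | zero => simp
  | succ K ih => rw [Nat.mul_succ, sum_range_add, ih, sum_range_succ]

lemma sum_range_neg_pow_of_even {K : Type*} [Field K] {x : K} (hx : x ≠ -1) {n : ℕ}
    (hn : Even n) : ∑ r ∈ range n, (-x) ^ r = (1 - x ^ n) / (1 + x) := by
  have hx' : -x - 1 ≠ 0 := fun h => hx (by linear_combination -h)
  have hx'' : 1 + x ≠ 0 := fun h => hx (by linear_combination h)
  rw [geom_sum_eq (fun h => hx' (by rw [h]; ring)), hn.neg_pow, div_eq_div_iff hx' hx'']
  ring

section Periodic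

variable {a b p : ℕ} {bs : ℕ → ℕ}

lemma prod_periodic_reverse (hbs : ∀ j, 1 ≤ j → bs j = if p ∣ j then b else a)
    {i K : ℕ} (hi : i < p * K) :
    ∏ j ∈ range (i + 1), bs (p * K - j) = b ^ (i / p + 1) * a ^ (i - i / p) := by
  rw [← prod_range_succ_ite_dvd]
  refine prod_congr rfl fun j hj => ?_
  have hjK : j < p * K := by rw [mem_range] at hj; omega
  rw [hbs _ (by omega)]
  exact if_congr (Nat.dvd_sub_iff_right hjK.le (dvd_mul_right p K)) rfl rfl

lemma alternating_term_block_eq {l q r : ℕ} (hl : Odd l) (hr : r < l + 1) :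
    (-1 : ℝ) ^ ((l + 1) * q + r) *
        ((b : ℝ) ^ (((l + 1) * q + r) / (l + 1) + 1) *
          (a : ℝ) ^ ((l + 1) * q + r - ((l + 1) * q + r) / (l + 1)))⁻¹ =
      (-(a : ℝ)⁻¹) ^ r * (b : ℝ)⁻¹ * (((a : ℝ) ^ l * b)⁻¹) ^ q := by
  have hdiv : ((l + 1) * q + r) / (l + 1) = q := by
    rw [Nat.mul_add_div l.succ_pos, Nat.div_eq_of_lt hr, add_zero]
  rw [hdiv, show (l + 1) * q + r - q = l * q + r by rw [Nat.succ_mul]; omega, pow_add,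
    pow_mul, hl.add_one.neg_one_pow, one_pow, one_mul]
  ring

lemma Dk_periodic_eq_geom_sum {l : ℕ} (hl : Odd l)
    (hbs : ∀ j, 1 ≤ j → bs j = if (l + 1) ∣ j then b else a) (K : ℕ) :
    Dk bs ((l + 1) * K) = ∑ q ∈ range K,
      (∑ r ∈ range (l + 1), (-(a : ℝ)⁻¹) ^ r) * (b : ℝ)⁻¹ * (((a : ℝ) ^ l * b)⁻¹) ^ q := by
  rw [Dk, sum_range_mul_eq_sum_sum]
  refine sum_congr rfl fun q hq => ?_
  rw [sum_mul, sum_mul]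
  refine sum_congr rfl fun r hr => ?_
  rw [mem_range] at hq hr
  have hi : (l + 1) * q + r < (l + 1) * K := by nlinarith
  rw [← Nat.cast_prod, prod_periodic_reverse hbs hi]
  push_cast
  exact alternating_term_block_eq hl hr

end Periodic

theorem stmt15_general (a b l : ℕ) (ha : 2 ≤ a) (hab : a < b)
    (hl : Odd l)
    (bs : ℕ → ℕ)
    (hbs : ∀ j, 1 ≤ j → bs j = if (l + 1) ∣ j then b else a) :
    Tendsto (fun k : ℕ => Dk bs ((l + 1) * k)) atTop
      (𝓝 ((1 - 1 / (a : ℝ) ^ (l + 1)) /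
        ((b : ℝ) * (1 + 1 / (a : ℝ)) * (1 - 1 / ((a : ℝ) ^ l * (b : ℝ)))))) := by
  have ha' : (2 : ℝ) ≤ a := by exact_mod_cast ha
  have hb' : (2 : ℝ) ≤ b := by exact_mod_cast (ha.trans hab.le)
  have hal : (1 : ℝ) ≤ (a : ℝ) ^ l := one_le_pow₀ (by linarith)
  have hratio : ((a : ℝ) ^ l * b)⁻¹ < 1 := inv_lt_one_of_one_lt₀ (by nlinarith)
  have hsum := ((hasSum_geometric_of_lt_one (by positivity) hratio).mul_left
    ((∑ r ∈ range (l + 1), (-(a : ℝ)⁻¹) ^ r) * (b : ℝ)⁻¹)).tendsto_sum_nat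
  simp_rw [Dk_periodic_eq_geom_sum hl hbs]
  convert hsum using 2
  rw [sum_range_neg_pow_of_even (by linarith [inv_nonneg.mpr (a.cast_nonneg (α := ℝ))])
    hl.add_one]
  simp only [one_div, inv_pow]
  field_simp

theorem stmt15 (a b l : ℕ) (ha : 2 ≤ a) (hab : a < b) (hb : a + 2 ≤ b)
    (hl : Odd l) (hl0 : 0 < l)
    (bs : ℕ → ℕ) (hbs0 : bs 0 = 1)
    (hbs : ∀ j, 1 ≤ j → bs j = if (l + 1) ∣ j then b else a) :
    Tendsto (fun k : ℕ => Dk bs ((l + 1) * k)) atTop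
      (𝓝 ((1 - 1 / (a : ℝ) ^ (l + 1)) /
        ((b : ℝ) * (1 + 1 / (a : ℝ)) * (1 - 1 / ((a : ℝ) ^ l * (b : ℝ)))))) :=
  stmt15_general a b l ha hab hl bs hbs
end
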